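/- arXiv:1604.05902 — 8 statements merged into one kernel-verified Lean document; each statement's English description precedes it below -/
import Mathlib

section
/- Let G be a finite group whose central quotient G/Z(G) is isomorphic to ℤ_p × ℤ_p for a prime p. Then the commuting graph Γ_G is a disjoint union of p + 1 complete graphs each on (p − 1)·|Z(G)| vertices; that is, Γ_G has exactly p + 1 connected components, every connected component is a clique, and each component has exactly (p − 1)·|Z(G)| vertices. -/
/-!
Write `Z = Z(G)`, so `|G : Z| = p²`. For a non-central `x`, the centralizer `C(x)` lies strictly
between `Z` and `G` (it contains `x`), so `|C(x) : Z| = p`; then `C(x)/Z` is cyclic and, as `Z` is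
central in `C(x)`, `C(x)` is abelian. Hence commuting is transitive through non-central elements:
two vertices are connected iff they commute, every component is a clique, and the component of
`x` is `C(x) \ Z`, of size `(p - 1)|Z|`. Counting the `(p² - 1)|Z|` vertices gives `p + 1`
components.
-/

/-- The commuting graph of a group `G`: vertices are the non-central elements,
two distinct vertices are adjacent iff they commute. -/
def commutingGraph (G : Type*) [Group G] : SimpleGraph {x : G // x ∉ Subgroup.center G} where
  Adj x y := x ≠ y ∧ (x : G) * y = (y : G) * x
  symm := ⟨by rintro x y ⟨hne, hc⟩; exact ⟨hne.symm, hc.symm⟩⟩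
  loopless := ⟨by rintro x ⟨hne, _⟩; exact hne rfl⟩

theorem Nat.card_eq_card_mul_of_card_fiber_eq {α β : Type*} [Finite α] [Finite β]
    (f : α → β) {k : ℕ} (hf : ∀ b, Nat.card {a // f a = b} = k) :
    Nat.card α = Nat.card β * k := by
  have := Fintype.ofFinite β
  rw [← Nat.card_congr (Equiv.sigmaFiberEquiv f), Nat.card_sigma]
  simp [hf]

open Subgroup

section

variable {G : Type*} [Group G]

theorem Subgroup.card_sdiff_of_le [Finite G] {H K : Subgroup G} (h : H ≤ K) :
    Nat.card ↥((K : Set G) \ H) = Nat.card K - Nat.card H := by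
  simp only [Nat.card_coe_set_eq]
  exact Set.ncard_sdiff h

theorem Subgroup.card_compl [Finite G] (H : Subgroup G) :
    Nat.card {x : G // x ∉ H} = Nat.card G - Nat.card H := by
  have h := Set.ncard_compl (H : Set G)
  rwa [← Nat.card_coe_set_eq, ← Nat.card_coe_set_eq] at h

theorem Subgroup.card_eq_relIndex_mul_card {H K : Subgroup G} (h : H ≤ K) :
    Nat.card K = H.relIndex K * Nat.card H := by
  rw [← relIndex_bot_left, ← relIndex_bot_left, mul_comm]
  exact (relIndex_mul_relIndex _ _ _ bot_le h).symm

theorem Subgroup.isMulCommutative_of_relIndex_center_prime {H : Subgroup G}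
    (h : ((center G).relIndex H).Prime) : IsMulCommutative H := by
  have := Fact.mk h
  have : IsCyclic (H ⧸ (center G).subgroupOf H) :=
    isCyclic_of_prime_card (p := (center G).relIndex H) (index_eq_card _).symm
  refine MonoidHom.isMulCommutative_of_isCyclic_of_ker_le_center
    (QuotientGroup.mk' ((center G).subgroupOf H)) ?_
  rw [QuotientGroup.ker_mk']
  exact fun a ha ↦ mem_center_iff.mpr fun b ↦ Subtype.ext (mem_center_iff.mp ha b)

theorem Subgroup.relIndex_center_centralizer {p : ℕ} (hp : p.Prime)
    (hZ : (center G).index = p ^ 2) {x : G} (hx : x ∉ center G) :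
    (center G).relIndex (centralizer {x}) = p := by
  have hmul := relIndex_mul_index (center_le_centralizer {x})
  obtain ⟨i, hi, hpow⟩ := (Nat.dvd_prime_pow hp).mp (hZ ▸ Dvd.intro _ hmul)
  have hx_mem : x ∈ centralizer {x} := mem_centralizer_singleton_iff.mpr rfl
  interval_cases i
  · exact absurd (relIndex_eq_one.mp (by simpa using hpow) hx_mem) hx
  · simpa using hpow
  · rw [hpow, hZ] at hmul
    have htop := index_eq_one.mp ((Nat.mul_eq_left (pow_ne_zero 2 hp.ne_zero)).mp hmul)
    exact absurd (centralizer_eq_top_iff_subset.mp htop rfl) hx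

theorem Commute.trans_of_isMulCommutative_centralizer {x y z : G}
    (hy : IsMulCommutative (centralizer {y})) (hxy : Commute x y) (hyz : Commute y z) :
    Commute x z :=
  congrArg Subtype.val (hy.is_comm.comm ⟨x, mem_centralizer_singleton_iff.mpr hxy⟩
    ⟨z, mem_centralizer_singleton_iff.mpr hyz.symm⟩)

section CommutingGraph

variable (hCA : ∀ y : G, y ∉ center G → IsMulCommutative (centralizer {y}))
include hCA

theorem commutingGraph_reachable_iff {x y : {x : G // x ∉ center G}} :
    (commutingGraph G).Reachable x y ↔ Commute (x : G) y := by
  constructor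
  · rintro ⟨w⟩
    induction w with
    | nil => exact Commute.refl _
    | @cons _ v _ hadj _ ih =>
      exact .trans_of_isMulCommutative_centralizer (hCA v v.2) hadj.2 ih
  · intro h
    by_cases hxy : x = y
    · exact hxy ▸ .refl x
    · exact (show (commutingGraph G).Adj x y from ⟨hxy, h⟩).reachable

theorem commutingGraph_eq_or_adj_of_reachable {x y : {x : G // x ∉ center G}}
    (h : (commutingGraph G).Reachable x y) : x = y ∨ (commutingGraph G).Adj x y := by
  by_cases hxy : x = y
  · exact .inl hxy
  · exact .inr ⟨hxy, (commutingGraph_reachable_iff hCA).mp h⟩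

theorem card_commutingGraph_connectedComponent [Finite G] (x : {x : G // x ∉ center G}) :
    Nat.card {y // (commutingGraph G).connectedComponentMk y =
        (commutingGraph G).connectedComponentMk x} =
      Nat.card (centralizer {(x : G)}) - Nat.card (center G) := by
  simp only [SimpleGraph.ConnectedComponent.eq, commutingGraph_reachable_iff hCA]
  rw [← card_sdiff_of_le (center_le_centralizer {(x : G)})]
  exact Nat.card_congr
    ⟨fun y ↦ ⟨y.1, mem_centralizer_singleton_iff.mpr y.2, y.1.2⟩,
      fun y ↦ ⟨⟨y, y.2.2⟩, mem_centralizer_singleton_iff.mp y.2.1⟩,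
      fun _ ↦ rfl, fun _ ↦ rfl⟩

end CommutingGraph

end

theorem commuting_graph_disjoint_cliques_of_central_quotient_p_p
    (p : ℕ) (hp : p.Prime) (G : Type*) [Group G] [Finite G]
    (hZ : Nonempty ((G ⧸ Subgroup.center G) ≃* (ZMod p × ZMod p))) :
    Nat.card (commutingGraph G).ConnectedComponent = p + 1 ∧
      (∀ x y : {x : G // x ∉ Subgroup.center G},
        (commutingGraph G).Reachable x y → x = y ∨ (commutingGraph G).Adj x y) ∧
      ∀ c : (commutingGraph G).ConnectedComponent,
        Nat.card {x : {x : G // x ∉ Subgroup.center G} //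
            (commutingGraph G).connectedComponentMk x = c} =
          (p - 1) * Nat.card (Subgroup.center G) := by
  obtain ⟨e⟩ := hZ
  have hindex : (center G).index = p ^ 2 := by
    rw [index_eq_card, Nat.card_congr e.toEquiv, Nat.card_prod, Nat.card_zmod, sq]
  have hrelIndex (y : G) (hy : y ∉ center G) := relIndex_center_centralizer hp hindex hy
  have hCA (y : G) (hy : y ∉ center G) :=
    isMulCommutative_of_relIndex_center_prime (hrelIndex y hy ▸ hp)
  have hcomponent (c : (commutingGraph G).ConnectedComponent) :
      Nat.card {x // (commutingGraph G).connectedComponentMk x = c} =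
        (p - 1) * Nat.card (center G) := by
    induction c using SimpleGraph.ConnectedComponent.ind with
    | h x =>
      rw [card_commutingGraph_connectedComponent hCA, card_eq_relIndex_mul_card
        (center_le_centralizer _), hrelIndex x x.2, Nat.sub_one_mul]
  refine ⟨?_, fun _ _ ↦ commutingGraph_eq_or_adj_of_reachable hCA, hcomponent⟩
  have hvertices :
      Nat.card {x : G // x ∉ center G} = (p + 1) * ((p - 1) * Nat.card (center G)) := by
    rw [card_compl, ← card_mul_index (center G), hindex, ← Nat.mul_sub_one, mul_comm,
      ← mul_assoc, ← Nat.sq_sub_sq, one_pow]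
  have hcount := Nat.card_eq_card_mul_of_card_fiber_eq _ hcomponent
  rw [hvertices] at hcount
  have hpos : 0 < (p - 1) * Nat.card (center G) :=
    Nat.mul_pos (Nat.sub_pos_of_lt hp.one_lt) Nat.card_pos
  exact (Nat.eq_of_mul_eq_mul_right hpos hcount).symm
end

section
/- Let G be a non-abelian group of order p³ for a prime p. Then the characteristic polynomial of the adjacency matrix of the commuting graph Γ_G (over the reals) equals (X + 1)^(p³ − 2p − 1) · (X − (p² − p − 1))^(p + 1); in particular G is commuting integral. -/
open Polynomial

open scoped Classical in
/-- The characteristic polynomial (over `ℝ`) of the adjacency matrix of the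
commuting graph of `G`. -/
noncomputable def commCharpoly (G : Type*) [Group G] [Fintype G] : Polynomial ℝ :=
  ((commutingGraph G).adjMatrix ℝ).charpoly

/-!
In a non-abelian group of order `p ^ 3` the centre has order `p` and the centralizer of a
non-central element has order `p ^ 2`, so it is abelian. Hence commuting is transitive on
non-central elements and the commuting graph is a disjoint union of `p + 1` cliques with
`p ^ 2 - p` vertices each. In matrix form, `M = A + 1` satisfies `M * M = (p ^ 2 - p) • M`, so
every eigenvalue of the symmetric matrix `A` is `-1` or `p ^ 2 - p - 1`, and `trace A = 0`
fixes the multiplicities.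
-/

open Subgroup Finset

namespace Finset

@[to_additive]
theorem prod_comp_eq_pow_mul_pow_of_forall_eq_or_eq {ι α M : Type*} [Fintype ι] [CommMonoid M]
    {f : ι → α} {a b : α} [DecidablePred (f · = b)] (h : ∀ i, f i = a ∨ f i = b) (g : α → M) :
    ∏ i, g (f i) = g a ^ (Fintype.card ι - #{i | f i = b}) * g b ^ #{i | f i = b} := by
  have hcard := card_filter_add_card_filter_not (s := univ) (f · = b)
  rw [← prod_filter_not_mul_prod_filter univ (f · = b), prod_eq_pow_card (b := g a),
    prod_eq_pow_card (b := g b), ← card_univ, ← hcard, Nat.add_sub_cancel_left]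
  · simp +contextual
  · intro i hi
    rw [(h i).resolve_right (mem_filter.mp hi).2]

end Finset

theorem Polynomial.eq_or_eq_of_isRoot_pow_mul_pow {R : Type*} [CommRing R] [IsDomain R]
    {a b μ : R} {m n : ℕ} (h : ((X - C a) ^ m * (X - C b) ^ n).IsRoot μ) : μ = a ∨ μ = b := by
  simp only [IsRoot.def, eval_mul, eval_pow, eval_sub, eval_X, eval_C, mul_eq_zero,
    pow_eq_zero_iff', sub_eq_zero] at h
  exact h.imp And.left And.left

namespace Matrix.IsHermitian

variable {n : Type*} [Fintype n] [DecidableEq n] {A : Matrix n n ℝ}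

theorem isRoot_eigenvalues_of_aeval_eq_zero (hA : A.IsHermitian) {q : ℝ[X]}
    (hq : aeval A q = 0) (i : n) : q.IsRoot (hA.eigenvalues i) := by
  have : Nonempty n := ⟨i⟩
  simpa [hq, spectrum.zero_eq] using
    spectrum.subset_polynomial_aeval A q ⟨_, hA.eigenvalues_mem_spectrum_real i, rfl⟩

theorem charpoly_eq_of_add_one_mul_self_eq_smul (hA : A.IsHermitian) {c : ℝ} (hc : c ≠ 0)
    (hsq : (A + 1) * (A + 1) = c • (A + 1)) (htr : A.trace = 0) {k : ℕ}
    (hk : k * c = Fintype.card n) :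
    A.charpoly = (X + 1) ^ (Fintype.card n - k) * (X - C (c - 1)) ^ k := by
  have heig (i : n) : hA.eigenvalues i = -1 ∨ hA.eigenvalues i = c - 1 := by
    have := hA.isRoot_eigenvalues_of_aeval_eq_zero (q := (X + 1) * (X + 1) - c • (X + 1))
      (by simp [hsq]) i
    simp only [IsRoot.def, eval_sub, eval_mul, eval_smul, eval_add, eval_X, eval_one,
      smul_eq_mul] at this
    have : (hA.eigenvalues i + 1) * (hA.eigenvalues i - (c - 1)) = 0 := by linarith
    exact (mul_eq_zero.mp this).imp eq_neg_of_add_eq_zero_left sub_eq_zero.mp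
  have hm : #{i | hA.eigenvalues i = c - 1} = k := by
    have hsum := Finset.sum_comp_eq_nsmul_add_nsmul_of_forall_eq_or_eq heig id
    set m := #{i | hA.eigenvalues i = c - 1}
    have hle : m ≤ Fintype.card n := card_le_univ _
    have htrace : ∑ i, hA.eigenvalues i = 0 := by
      simpa [htr] using hA.trace_eq_sum_eigenvalues.symm
    simp only [id_eq, htrace, nsmul_eq_mul, Nat.cast_sub hle] at hsum
    have : (m : ℝ) * c = k * c := by rw [hk]; linarith
    exact_mod_cast mul_right_cancel₀ hc this
  rw [hA.charpoly_eq, ← hm]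
  convert Finset.prod_comp_eq_pow_mul_pow_of_forall_eq_or_eq heig (fun μ => X - C μ) using 3
  · rfl
  · rw [map_neg, map_one, sub_neg_eq_add]

end Matrix.IsHermitian

section PGroup

variable {G : Type*} [Group G] {p : ℕ} [hp : Fact p.Prime]

theorem card_center_eq_prime_of_card_eq_prime_pow_three (hcard : Nat.card G = p ^ 3)
    (hna : ∃ a b : G, a * b ≠ b * a) : Nat.card (center G) = p := by
  obtain ⟨k, hk0, hk⟩ := IsPGroup.card_center_eq_prime_pow hcard (by norm_num)
  obtain ⟨a, b, hab⟩ := hna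
  rcases Nat.lt_or_ge k 2 with hk2 | hk2
  · rw [hk, show k = 1 by omega, pow_one]
  -- a centre of order at least `p ^ 2` has index dividing `p`, so `G ⧸ center G` is cyclic
  have hindex : (center G).index ∣ p := by
    refine Nat.dvd_of_mul_dvd_mul_left (pow_pos hp.out.pos k) ?_
    rw [← hk, card_mul_index, hcard, hk, ← pow_succ]
    exact pow_dvd_pow p (by omega)
  have : IsCyclic (G ⧸ center G) := isCyclic_of_card_dvd_prime hindex
  exact absurd ((isMulCommutative_of_isCyclic_quotient_center_self G).is_comm.comm a b) hab

theorem card_centralizer_eq_prime_sq_of_card_eq_prime_pow_three (hcard : Nat.card G = p ^ 3)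
    (hna : ∃ a b : G, a * b ≠ b * a) {x : G} (hx : x ∉ center G) :
    Nat.card (centralizer {x}) = p ^ 2 := by
  have : Finite G := Nat.finite_of_card_ne_zero (by simp [hcard, hp.out.ne_zero])
  have hne_center (h : Nat.card (centralizer {x}) ≤ p) : False := by
    rw [← card_center_eq_prime_of_card_eq_prime_pow_three hcard hna] at h
    exact hx <| eq_of_le_of_card_ge (center_le_centralizer _) h ▸
      mem_centralizer_singleton_iff.mpr rfl
  have hne_top (h : Nat.card (centralizer {x}) = p ^ 3) : False := by
    rw [← hcard] at h
    refine hx (mem_center_iff.mpr fun g => ?_)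
    exact mem_centralizer_singleton_iff.mp (eq_top_of_card_eq _ h ▸ mem_top g)
  obtain ⟨j, hj3, hj⟩ :=
    (Nat.dvd_prime_pow hp.out).mp (hcard ▸ card_subgroup_dvd_card (centralizer {x}))
  interval_cases j
  · exact (hne_center (by simp [hj, hp.out.one_le])).elim
  · exact (hne_center (hj.trans (pow_one p)).le).elim
  · exact hj
  · exact (hne_top hj).elim

end PGroup

section CommutingGraph

variable {G : Type*} [Group G]

theorem commute_trans_of_notMem_center
    (hCA : ∀ y ∉ center G, IsMulCommutative (centralizer {y})) {x y z : G} (hy : y ∉ center G)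
    (hxy : Commute x y) (hyz : Commute y z) : Commute x z :=
  congrArg Subtype.val <| (hCA y hy).is_comm.comm
    ⟨x, mem_centralizer_singleton_iff.mpr hxy⟩ ⟨z, mem_centralizer_singleton_iff.mpr hyz.symm⟩

open scoped Classical

theorem commutingGraph_adjMatrix_add_one_apply (x y : {g : G // g ∉ center G}) :
    ((commutingGraph G).adjMatrix ℝ + 1) x y = if Commute (x : G) y then 1 else 0 := by
  by_cases hxy : x = y
  · subst hxy; simp
  · rw [Matrix.add_apply, SimpleGraph.adjMatrix_apply, Matrix.one_apply_ne hxy, add_zero]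
    exact if_congr ⟨And.right, And.intro hxy⟩ rfl rfl

variable [Fintype G]

theorem card_filter_commute_notMem_center (x : G) :
    #{y : {g : G // g ∉ center G} | Commute x y} =
      Nat.card (centralizer {x}) - Nat.card (center G) := by
  rw [← Fintype.card_subtype, ← Nat.card_eq_fintype_card,
    Nat.card_congr (Equiv.subtypeSubtypeEquivSubtypeInter _ _)]
  calc Nat.card {g // g ∉ center G ∧ Commute x g}
      = Nat.card ↥((centralizer {x} : Set G) \ center G) :=
        Nat.card_congr <| Equiv.subtypeEquivRight fun g => by
          rw [Set.mem_sdiff, SetLike.mem_coe, mem_centralizer_singleton_iff, and_comm]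
          exact and_congr ⟨Commute.symm, Commute.symm⟩ Iff.rfl
    _ = Nat.card (centralizer {x}) - Nat.card (center G) := by
      rw [Nat.card_coe_set_eq, Set.ncard_sdiff (center_le_centralizer {x})]
      rfl

theorem card_notMem_center :
    Fintype.card {g : G // g ∉ center G} = Nat.card G - Nat.card (center G) := by
  rw [Fintype.card_subtype_compl, Nat.card_eq_fintype_card, Nat.card_eq_fintype_card]

theorem commutingGraph_adjMatrix_add_one_mul_self
    (hCA : ∀ y ∉ center G, IsMulCommutative (centralizer {y})) {m : ℕ}
    (hm : ∀ x ∉ center G, Nat.card (centralizer {x}) = m) :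
    ((commutingGraph G).adjMatrix ℝ + 1) * ((commutingGraph G).adjMatrix ℝ + 1) =
      ((m - Nat.card (center G) : ℕ) : ℝ) • ((commutingGraph G).adjMatrix ℝ + 1) := by
  ext x z
  simp only [Matrix.mul_apply, Matrix.smul_apply, commutingGraph_adjMatrix_add_one_apply,
    ← ite_and, sum_boole, smul_eq_mul, mul_ite, mul_one, mul_zero]
  split_ifs with hxz
  · rw [← hm x x.2, ← card_filter_commute_notMem_center]
    congr 2; ext y
    simp only [mem_filter, mem_univ, true_and]
    exact and_iff_right_of_imp fun hxy => commute_trans_of_notMem_center hCA x.2 hxy.symm hxz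
  · rw [filter_false_of_mem fun y _ h => hxz (commute_trans_of_notMem_center hCA y.2 h.2 h.1)]
    simp

end CommutingGraph

theorem commuting_integral_of_order_p_cubed
    (p : ℕ) (hp : p.Prime) (G : Type*) [Group G] [Fintype G]
    (hcard : Nat.card G = p ^ 3)
    (hna : ∃ a b : G, a * b ≠ b * a) :
    commCharpoly G =
        (X + 1) ^ (p ^ 3 - 2 * p - 1) *
          (X - C ((p : ℝ) ^ 2 - p - 1)) ^ (p + 1) ∧
      ∀ μ : ℝ, (commCharpoly G).IsRoot μ → ∃ k : ℤ, μ = (k : ℝ) := by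
  classical
  have : Fact p.Prime := ⟨hp⟩
  have hZ := card_center_eq_prime_of_card_eq_prime_pow_three hcard hna
  have hC (x : G) (hx : x ∉ center G) :=
    card_centralizer_eq_prime_sq_of_card_eq_prime_pow_three hcard hna hx
  have hsq := commutingGraph_adjMatrix_add_one_mul_self
    (fun x hx => IsPGroup.isMulCommutative_of_card_eq_prime_sq (hC x hx)) hC
  have hp2 : p ≤ p ^ 2 := Nat.le_self_pow two_ne_zero p
  have hp3 : p ≤ p ^ 3 := Nat.le_self_pow three_ne_zero p
  have hcharpoly : commCharpoly G =
      (X + 1) ^ (p ^ 3 - 2 * p - 1) * (X - C ((p : ℝ) ^ 2 - p - 1)) ^ (p + 1) := by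
    rw [hZ, Nat.cast_sub hp2, Nat.cast_pow] at hsq
    have := ((commutingGraph G).isHermitian_adjMatrix ℝ).charpoly_eq_of_add_one_mul_self_eq_smul
      (by have : (2 : ℝ) ≤ p := mod_cast hp.two_le; nlinarith) hsq
      ((commutingGraph G).trace_adjMatrix ℝ) (k := p + 1) (by
        rw [card_notMem_center, hcard, hZ, Nat.cast_sub hp3]; push_cast; ring)
    rwa [card_notMem_center, hcard, hZ, Nat.sub_sub, show p + (p + 1) = 2 * p + 1 by ring]
      at this
  refine ⟨hcharpoly, fun μ hμ => ?_⟩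
  rw [hcharpoly, show (X : ℝ[X]) + 1 = X - C (-1) by simp] at hμ
  rcases Polynomial.eq_or_eq_of_isRoot_pow_mul_pow hμ with rfl | rfl
  · exact ⟨-1, by simp⟩
  · exact ⟨p ^ 2 - p - 1, by push_cast; ring⟩
end

section
/- Let G be a finite non-abelian group that is 4-centralizer, i.e., the set {C_G(x) : x ∈ G} of centralizers of elements of G has exactly 4 members. Then the characteristic polynomial of the adjacency matrix of the commuting graph Γ_G (over the reals) equals (X + 1)^(3·(|Z(G)| − 1)) · (X − (|Z(G)| − 1))^3; in particular G is commuting integral. -/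
open Polynomial

/-!
In a 4-centralizer group the centralizers other than `G` are three proper subgroups `A, B, C`;
they cover `G`, since `g ∈ C_G(g)`, and an element lying in all three is central. By Scorza's
argument (a group is never the union of two proper subgroups), `A ∩ B ⊆ C`, and left
multiplication by some `β ∈ B \ A` maps `A \ Z(G)` into `C`, so two non-central elements of `A`
differ by an element of `A ∩ C ⊆ Z(G)`. Hence non-central `x, y` commute iff `x Z(G) = y Z(G)`.
Then `g Z(G) ↦ C_G(g)` is a bijection onto the set of centralizers, so `|G / Z(G)| = 4`, and `Γ_G`
is the disjoint union of three complete graphs on `n = |Z(G)|` vertices, each with adjacency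
matrix `J - I` and characteristic polynomial `(X + 1)^(n - 1) (X - (n - 1))`.
-/

namespace Subgroup

variable {G : Type*} [Group G]

theorem exists_notMem_of_ne_top_of_ne_top {A B : Subgroup G} (hA : A ≠ ⊤) (hB : B ≠ ⊤) :
    ∃ g, g ∉ A ∧ g ∉ B := by
  obtain ⟨u, hu⟩ := SetLike.exists_not_mem_of_ne_top A hA
  obtain ⟨v, hv⟩ := SetLike.exists_not_mem_of_ne_top B hB
  by_cases huB : u ∈ B
  · by_cases hvA : v ∈ A
    · exact ⟨u * v, by rwa [mul_mem_cancel_right hvA], by rwa [mul_mem_cancel_left huB]⟩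
    · exact ⟨v, hvA, hv⟩
  · exact ⟨u, hu, huB⟩

theorem inf_le_of_forall_mem_or_mem_or_mem {A B C : Subgroup G}
    (hcov : ∀ g, g ∈ A ∨ g ∈ B ∨ g ∈ C) (hA : A ≠ ⊤) (hB : B ≠ ⊤) : A ⊓ B ≤ C := by
  intro x hx
  obtain ⟨hxA, hxB⟩ := mem_inf.1 hx
  obtain ⟨g, hgA, hgB⟩ := exists_notMem_of_ne_top_of_ne_top hA hB
  have hgC : g ∈ C := ((hcov g).resolve_left hgA).resolve_left hgB
  have hgxC : g * x ∈ C :=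
    ((hcov (g * x)).resolve_left (by rwa [mul_mem_cancel_right hxA])).resolve_left
      (by rwa [mul_mem_cancel_right hxB])
  exact (mul_mem_cancel_left hgC).1 hgxC

theorem inv_mul_mem_inf_of_forall_mem_or_mem_or_mem {A B C : Subgroup G}
    (hcov : ∀ g, g ∈ A ∨ g ∈ B ∨ g ∈ C) (hA : A ≠ ⊤) (hB : B ≠ ⊤) (hC : C ≠ ⊤)
    {x y : G} (hxA : x ∈ A) (hyA : y ∈ A) (hx : x ∉ A ⊓ B ⊓ C) (hy : y ∉ A ⊓ B ⊓ C) :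
    x⁻¹ * y ∈ A ⊓ B ⊓ C := by
  have hAB := inf_le_of_forall_mem_or_mem_or_mem hcov hA hB
  have hAC := inf_le_of_forall_mem_or_mem_or_mem (fun g => (hcov g).imp_right Or.symm) hA hC
  obtain ⟨β, hβA, hβC⟩ := exists_notMem_of_ne_top_of_ne_top hA hC
  have hβB : β ∈ B := ((hcov β).resolve_left hβA).resolve_right hβC
  have mul_mem_C : ∀ w ∈ A, w ∉ A ⊓ B ⊓ C → β * w ∈ C := fun w hwA hw =>
    ((hcov _).resolve_left (by rwa [mul_mem_cancel_right hwA])).resolve_left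
      (by rw [mul_mem_cancel_left hβB]; exact fun hwB => hw ⟨⟨hwA, hwB⟩, hAB ⟨hwA, hwB⟩⟩)
  have hC' : x⁻¹ * y ∈ C := by
    simpa [mul_assoc] using mul_mem (inv_mem (mul_mem_C x hxA hx)) (mul_mem_C y hyA hy)
  have hA' : x⁻¹ * y ∈ A := mul_mem (inv_mem hxA) hyA
  exact ⟨⟨hA', hAC ⟨hA', hC'⟩⟩, hC'⟩

theorem centralizer_singleton_eq_top_iff {g : G} : centralizer {g} = ⊤ ↔ g ∈ center G := by
  rw [centralizer_eq_top_iff_subset, Set.singleton_subset_iff, SetLike.mem_coe]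

theorem mem_centralizer_singleton_self (g : G) : g ∈ centralizer {g} :=
  mem_centralizer_singleton_iff.2 rfl

theorem commute_of_inv_mul_mem_center {x y : G} (h : x⁻¹ * y ∈ center G) : x * y = y * x := by
  simpa [mul_assoc] using congrArg (x * ·) (mem_center_iff.1 h x)

theorem centralizer_singleton_mul_of_mem_center (g : G) {z : G} (hz : z ∈ center G) :
    centralizer {g * z} = centralizer {g} := by
  ext k
  simp only [mem_centralizer_singleton_iff]
  rw [← mul_assoc, mul_assoc g, ← mem_center_iff.1 hz k, ← mul_assoc]
  exact mul_left_inj z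

theorem inv_mul_mem_center_of_centralizer_eq_or_eq_or_eq {A B C : Subgroup G}
    (hA : A ≠ ⊤) (hB : B ≠ ⊤) (hC : C ≠ ⊤)
    (hABC : ∀ g ∉ center G, centralizer {g} = A ∨ centralizer {g} = B ∨ centralizer {g} = C)
    {x y : G} (hx : x ∉ center G) (hy : y ∉ center G) (hxA : x ∈ A) (hyA : y ∈ A) :
    x⁻¹ * y ∈ center G := by
  have hcov : ∀ g, g ∈ A ∨ g ∈ B ∨ g ∈ C := by
    intro g
    obtain ⟨k, hk, hgk⟩ : ∃ k ∉ center G, g ∈ centralizer {k} := by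
      by_cases hg : g ∈ center G
      · exact ⟨x, hx, center_le_centralizer _ hg⟩
      · exact ⟨g, hg, mem_centralizer_singleton_self g⟩
    rcases hABC k hk with h | h | h <;> rw [h] at hgk <;> simp [hgk]
  have hD : A ⊓ B ⊓ C ≤ center G := by
    intro z hz
    obtain ⟨⟨hzA, hzB⟩, hzC⟩ := mem_inf.1 hz
    refine mem_center_iff.2 fun g => ?_
    by_cases hg : g ∈ center G
    · exact (mem_center_iff.1 hg z).symm
    · have hzg : z ∈ centralizer {g} := by
        rcases hABC g hg with h | h | h <;> rw [h] <;> assumption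
      exact (mem_centralizer_singleton_iff.1 hzg).symm
  exact hD (inv_mul_mem_inf_of_forall_mem_or_mem_or_mem hcov hA hB hC hxA hyA
    (mt (@hD x) hx) (mt (@hD y) hy))

theorem inv_mul_mem_center_of_card_range_centralizer_eq_four
    (h4 : Nat.card (Set.range fun g : G => centralizer ({g} : Set G)) = 4)
    {x y : G} (hx : x ∉ center G) (hy : y ∉ center G) (hxy : x * y = y * x) :
    x⁻¹ * y ∈ center G := by
  set P := (Set.range fun g : G => centralizer ({g} : Set G)) \ {⊤}
  have hP : ∀ g ∉ center G, centralizer {g} ∈ P := fun g hg =>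
    ⟨⟨g, rfl⟩, mt centralizer_singleton_eq_top_iff.1 hg⟩
  have hP3 : P.ncard = 3 := by
    have htop : (⊤ : Subgroup G) ∈ Set.range fun g : G => centralizer ({g} : Set G) :=
      ⟨1, centralizer_singleton_eq_top_iff.2 (one_mem _)⟩
    rw [Set.ncard_sdiff_singleton_of_mem htop, ← Nat.card_coe_set_eq, h4]
  obtain ⟨B, C, -, hBC⟩ : ∃ B C, B ≠ C ∧ P \ {centralizer {x}} = {B, C} := by
    rw [← Set.ncard_eq_two, Set.ncard_sdiff_singleton_of_mem (hP x hx), hP3]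
  have hBP : B ∈ P \ {centralizer {x}} := hBC ▸ Set.mem_insert _ _
  have hCP : C ∈ P \ {centralizer {x}} := hBC ▸ Set.mem_insert_of_mem _ rfl
  refine inv_mul_mem_center_of_centralizer_eq_or_eq_or_eq (hP x hx).2 hBP.1.2 hCP.1.2
    (fun g hg => ?_) hx hy (mem_centralizer_singleton_self x)
    (mem_centralizer_singleton_iff.2 hxy.symm)
  by_cases h : centralizer {g} = centralizer {x}
  · exact Or.inl h
  · have hg' : centralizer {g} ∈ P \ {centralizer {x}} := ⟨hP g hg, h⟩
    rw [hBC] at hg'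
    exact Or.inr hg'
theorem centralizer_singleton_eq_iff
    (hcomm : ∀ x y : G, x ∉ center G → y ∉ center G → x * y = y * x → x⁻¹ * y ∈ center G)
    {g h : G} : centralizer {g} = centralizer {h} ↔ g⁻¹ * h ∈ center G := by
  refine ⟨fun hgh => ?_, fun hz => by
    rw [← centralizer_singleton_mul_of_mem_center g hz, mul_inv_cancel_left]⟩
  have hcenter : g ∈ center G ↔ h ∈ center G := by
    rw [← centralizer_singleton_eq_top_iff, hgh, centralizer_singleton_eq_top_iff]
  by_cases hg : g ∈ center G
  · exact mul_mem (inv_mem hg) (hcenter.1 hg)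
  · refine hcomm g h hg (mt hcenter.2 hg) (mem_centralizer_singleton_iff.1 ?_)
    rw [← hgh]
    exact mem_centralizer_singleton_self g

theorem card_range_centralizer_eq_card_quotient_center
    (hcomm : ∀ x y : G, x ∉ center G → y ∉ center G → x * y = y * x → x⁻¹ * y ∈ center G) :
    Nat.card (Set.range fun g : G => centralizer ({g} : Set G)) = Nat.card (G ⧸ center G) :=
  Nat.card_congr <| (Setoid.quotientKerEquivRange _).symm.trans <|
    Quotient.congrRight fun _ _ => by
      rw [Setoid.ker_def, QuotientGroup.leftRel_apply]
      exact centralizer_singleton_eq_iff hcomm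

end Subgroup

theorem Matrix.charpoly_blockDiagonal {R m o : Type*} [CommRing R] [Fintype m] [DecidableEq m]
    [Fintype o] [DecidableEq o] (M : o → Matrix m m R) :
    (blockDiagonal M).charpoly = ∏ k, (M k).charpoly := by
  simp only [charpoly, ← det_blockDiagonal]
  congr 1
  ext ⟨i, k⟩ ⟨j, k'⟩
  by_cases hk : k = k'
  · subst hk
    by_cases hij : i = j <;> simp [blockDiagonal_apply, hij]
  · simp [blockDiagonal_apply, hk]

namespace SimpleGraph

open Matrix

theorem adjMatrix_boxProd_bot (R : Type*) [Zero R] [One R] {V W : Type*} [DecidableEq W]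
    (H : SimpleGraph V) [DecidableRel H.Adj] [DecidableRel (H □ (⊥ : SimpleGraph W)).Adj] :
    (H □ (⊥ : SimpleGraph W)).adjMatrix R = blockDiagonal fun _ => H.adjMatrix R := by
  ext ⟨i, k⟩ ⟨j, k'⟩
  by_cases hk : k = k' <;> simp [blockDiagonal_apply, hk]

theorem charpoly_adjMatrix_completeGraph (R : Type*) [CommRing R] (V : Type*) [Fintype V]
    [DecidableEq V] [Nonempty V] :
    ((completeGraph V).adjMatrix R).charpoly =
      (X + 1) ^ (Fintype.card V - 1) * (X - C ((Fintype.card V : R) - 1)) := by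
  have hJ : (completeGraph V).adjMatrix R = vecMulVec 1 1 - scalar V (1 : R) := by
    rw [adjMatrix_completeGraph_eq_of_one_sub_one]
    ext i j
    simp [vecMulVec]
  obtain ⟨n, hn⟩ : ∃ n, Fintype.card V = n + 1 :=
    ⟨_, (Nat.succ_pred_eq_of_pos Fintype.card_pos).symm⟩
  rw [hJ, charpoly_sub_scalar, charpoly_vecMulVec, one_dotProduct_one, hn]
  simp only [smul_eq_C_mul, sub_comp, mul_comp, pow_comp, add_comp, X_comp, one_comp,
    natCast_comp, map_add, map_natCast, map_one, Nat.cast_add, Nat.cast_one,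
    add_tsub_cancel_right, add_sub_cancel_right]
  ring

end SimpleGraph

open Subgroup

theorem commutingGraph_adj_iff {G : Type*} [Group G]
    (hcomm : ∀ x y : G, x ∉ center G → y ∉ center G → x * y = y * x → x⁻¹ * y ∈ center G)
    {x y : {g : G // g ∉ center G}} :
    (commutingGraph G).Adj x y ↔ x ≠ y ∧ ((x : G) : G ⧸ center G) = (y : G) := by
  rw [QuotientGroup.eq]
  exact and_congr_right' ⟨hcomm x y x.2 y.2, commute_of_inv_mul_mem_center⟩

noncomputable def noncentralEquiv (G : Type*) [Group G] :
    {x : G // x ∉ center G} ≃ center G × {q : G ⧸ center G // q ≠ 1} :=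
  ((groupEquivQuotientProdSubgroup.subtypeEquiv
    fun x => (QuotientGroup.eq_one_iff x).not.symm).trans
      Equiv.prodSubtypeFstEquivSubtypeProd).trans (Equiv.prodComm _ _)

theorem noncentralEquiv_snd {G : Type*} [Group G] (x : {x : G // x ∉ center G}) :
    ((noncentralEquiv G x).2 : G ⧸ center G) = (x : G) := rfl

noncomputable def commutingGraphIso {G : Type*} [Group G]
    (hcomm : ∀ x y : G, x ∉ center G → y ∉ center G → x * y = y * x → x⁻¹ * y ∈ center G) :
    commutingGraph G ≃g
      SimpleGraph.completeGraph (center G) □ (⊥ : SimpleGraph {q : G ⧸ center G // q ≠ 1}) where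
  toEquiv := noncentralEquiv G
  map_rel_iff' {x y} := by
    rw [commutingGraph_adj_iff hcomm, SimpleGraph.boxProd_adj]
    simp only [SimpleGraph.top_adj, SimpleGraph.bot_adj, false_and, or_false,
      ← noncentralEquiv_snd]
    constructor
    · rintro ⟨hne, heq⟩
      exact ⟨fun h => hne (by rw [h]), congrArg Subtype.val heq⟩
    · rintro ⟨hne, heq⟩
      exact ⟨fun h => hne ((noncentralEquiv G).injective (Prod.ext h (Subtype.ext heq))),
        Subtype.ext heq⟩

theorem commCharpoly_eq_of_inv_mul_mem_center {G : Type*} [Group G] [Fintype G]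
    (hcomm : ∀ x y : G, x ∉ center G → y ∉ center G → x * y = y * x → x⁻¹ * y ∈ center G) :
    commCharpoly G = ((X + 1) ^ (Nat.card (center G) - 1) *
      (X - C ((Nat.card (center G) : ℝ) - 1))) ^ (Nat.card (G ⧸ center G) - 1) := by
  classical
  have hiso := congrArg Matrix.charpoly
    (SimpleGraph.Iso.reindex_adjMatrix ℝ (commutingGraphIso hcomm))
  rw [Matrix.charpoly_reindex] at hiso
  have hblocks : Fintype.card {q : G ⧸ center G // q ≠ 1} = Nat.card (G ⧸ center G) - 1 := by
    rw [Fintype.card_subtype_compl, Fintype.card_subtype_eq, Nat.card_eq_fintype_card]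
  rw [commCharpoly, hiso, SimpleGraph.adjMatrix_boxProd_bot, Matrix.charpoly_blockDiagonal,
    Finset.prod_const, Finset.card_univ, hblocks, SimpleGraph.charpoly_adjMatrix_completeGraph]
  simp only [Nat.card_eq_fintype_card]

theorem commuting_integral_of_four_centralizer_general
    (G : Type*) [Group G] [Fintype G]
    (h4 : Nat.card (Set.range fun x : G => Subgroup.centralizer ({x} : Set G)) = 4) :
    commCharpoly G =
        (X + 1) ^ (3 * (Nat.card (Subgroup.center G) - 1)) *
          (X - C ((Nat.card (Subgroup.center G) : ℝ) - 1)) ^ 3 ∧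
      ∀ μ : ℝ, (commCharpoly G).IsRoot μ → ∃ k : ℤ, μ = (k : ℝ) := by
  have hcomm : ∀ x y : G, x ∉ center G → y ∉ center G → x * y = y * x → x⁻¹ * y ∈ center G :=
    fun _ _ => inv_mul_mem_center_of_card_range_centralizer_eq_four h4
  have hquot : Nat.card (G ⧸ center G) = 4 :=
    (card_range_centralizer_eq_card_quotient_center hcomm).symm.trans h4
  have hcp := commCharpoly_eq_of_inv_mul_mem_center hcomm
  rw [hquot] at hcp
  refine ⟨by rw [hcp]; ring, fun μ hμ => ?_⟩
  simp only [hcp, IsRoot, eval_mul, eval_pow, eval_add, eval_sub, eval_X, eval_one, eval_C,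
    mul_eq_zero, pow_eq_zero_iff', sub_eq_zero] at hμ
  rcases hμ with ⟨hμ, -⟩ | ⟨hμ, -⟩
  · exact ⟨-1, by push_cast; linarith⟩
  · exact ⟨Nat.card (center G) - 1, by push_cast; linarith⟩

theorem commuting_integral_of_four_centralizer
    (G : Type*) [Group G] [Fintype G]
    (hna : ∃ a b : G, a * b ≠ b * a)
    (h4 : Nat.card (Set.range fun x : G => Subgroup.centralizer ({x} : Set G)) = 4) :
    commCharpoly G =
        (X + 1) ^ (3 * (Nat.card (Subgroup.center G) - 1)) *
          (X - C ((Nat.card (Subgroup.center G) : ℝ) - 1)) ^ 3 ∧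
      ∀ μ : ℝ, (commCharpoly G).IsRoot μ → ∃ k : ℤ, μ = (k : ℝ) :=
  commuting_integral_of_four_centralizer_general G h4
end

section
/- Let m ≥ 2 and let G be a finite group whose central quotient G/Z(G) is isomorphic to the dihedral group D_{2m} of order 2m, and let n = |Z(G)|. Then the commuting graph Γ_G is a disjoint union of one complete graph on (m − 1)·n vertices and m complete graphs each on n vertices; that is, Γ_G has exactly m + 1 connected components, every connected component is a clique, exactly one component has (m − 1)·n vertices, and the remaining m components each have n vertices. -/
namespace SimpleGraph

variable {V α : Type*} {Γ : SimpleGraph V} {f : V → α}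

theorem reachable_iff_of_adj_iff (hΓ : ∀ x y, Γ.Adj x y ↔ x ≠ y ∧ f x = f y) {x y : V} :
    Γ.Reachable x y ↔ f x = f y := by
  constructor
  · rintro ⟨p⟩
    induction p with
    | nil => rfl
    | cons hadj _ ih => exact ((hΓ _ _).1 hadj).2.trans ih
  · intro h
    by_cases hxy : x = y
    · exact hxy ▸ Reachable.refl x
    · exact ((hΓ x y).2 ⟨hxy, h⟩).reachable

theorem eq_or_adj_of_reachable_of_adj_iff (hΓ : ∀ x y, Γ.Adj x y ↔ x ≠ y ∧ f x = f y)
    {x y : V} (h : Γ.Reachable x y) : x = y ∨ Γ.Adj x y := by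
  rw [hΓ, ← reachable_iff_of_adj_iff hΓ]
  tauto

noncomputable def connectedComponentEquivOfAdjIff
    (hΓ : ∀ x y, Γ.Adj x y ↔ x ≠ y ∧ f x = f y) (hf : Function.Surjective f) :
    Γ.ConnectedComponent ≃ α :=
  Equiv.ofBijective
    (ConnectedComponent.lift f fun _ _ p _ => (reachable_iff_of_adj_iff hΓ).1 ⟨p⟩)
    ⟨fun c d => by
      induction c using ConnectedComponent.ind
      induction d using ConnectedComponent.ind
      exact fun h => ConnectedComponent.sound ((reachable_iff_of_adj_iff hΓ).2 h),
    fun a => let ⟨v, hv⟩ := hf a; ⟨Γ.connectedComponentMk v, hv⟩⟩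

theorem card_connectedComponentMk_eq_of_adj_iff
    (hΓ : ∀ x y, Γ.Adj x y ↔ x ≠ y ∧ f x = f y) (hf : Function.Surjective f)
    (c : Γ.ConnectedComponent) :
    Nat.card {x // Γ.connectedComponentMk x = c} =
      Nat.card {x // f x = connectedComponentEquivOfAdjIff hΓ hf c} := by
  induction c using ConnectedComponent.ind with
  | h v =>
    exact Nat.card_congr <| Equiv.subtypeEquivRight fun x =>
      ConnectedComponent.eq.trans (reachable_iff_of_adj_iff hΓ)

end SimpleGraph

section GroupHom

variable {G H : Type*} [Group G] [Group H]

theorem MonoidHom.card_preimage_of_surjective (π : G →* H) (hπ : Function.Surjective π)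
    (s : Set H) : Nat.card (π ⁻¹' s) = Nat.card π.ker * Nat.card s := by
  let e := QuotientGroup.quotientKerEquivOfSurjective π hπ
  have : π ⁻¹' s = QuotientGroup.mk ⁻¹' (e ⁻¹' s) := rfl
  rw [this, QuotientGroup.card_preimage_mk,
    Nat.card_preimage_of_injective e.injective (by simp [e.surjective.range_eq])]

theorem MonoidHom.card_subtype_compl_ker {π : G →* H} {N : Subgroup G} (hker : π.ker = N)
    (hπ : Function.Surjective π) (p : H → Prop) :
    Nat.card {x : {x : G // x ∉ N} // p (π x)} =
      Nat.card N * Nat.card {d : H | d ≠ 1 ∧ p d} := by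
  calc _ = Nat.card (π ⁻¹' {d : H | d ≠ 1 ∧ p d}) :=
        Nat.card_congr <| (Equiv.subtypeSubtypeEquivSubtypeInter (· ∉ N) (p ∘ π)).trans <|
          Equiv.subtypeEquivRight fun x => by rw [← hker, MonoidHom.mem_ker]; rfl
    _ = _ := by rw [π.card_preimage_of_surjective hπ, hker]

namespace Subgroup

theorem mem_center_of_commute_of_closure_image_eq_top {f : G →* H} (hf : f.ker ≤ center G)
    {s : Set G} (hs : closure (f '' s) = ⊤) {x : G} (hx : ∀ y ∈ s, Commute x y) :
    x ∈ center G := by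
  have hmap : (centralizer {x}).map f = ⊤ :=
    top_le_iff.1 <| hs ▸ (closure_le _).2 <| Set.image_mono fun y hy =>
      mem_centralizer_singleton_iff.2 (hx y hy).symm
  have htop : centralizer {x} = ⊤ := by
    rw [← comap_map_eq_self (hf.trans (center_le_centralizer _)), hmap, comap_top]
  exact Set.singleton_subset_iff.1 (centralizer_eq_top_iff_subset.1 htop)

theorem commute_of_map_mem_zpowers {f : G →* H} (hf : f.ker ≤ center G) (g : G) {x y : G}
    (hx : f x ∈ zpowers (f g)) (hy : f y ∈ zpowers (f g)) : Commute x y := by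
  have eq_zpow_mul_central :
      ∀ {x}, f x ∈ zpowers (f g) → ∃ k : ℤ, ∃ z ∈ center G, x = g ^ k * z := by
    rintro x ⟨k, hk : f g ^ k = f x⟩
    refine ⟨k, (g ^ k)⁻¹ * x, hf ?_, by group⟩
    rw [MonoidHom.mem_ker, map_mul, map_inv, map_zpow, hk, inv_mul_cancel]
  obtain ⟨k, z, hz, rfl⟩ := eq_zpow_mul_central hx
  obtain ⟨l, w, hw, rfl⟩ := eq_zpow_mul_central hy
  exact ((Commute.zpow_zpow_self g k l).mul_right (mem_center_iff.1 hw _)).mul_left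
    (mem_center_iff.1 hz _).symm

end Subgroup

end GroupHom

namespace DihedralGroup

variable {m : ℕ}

def reflectionIndex : DihedralGroup m → Option (ZMod m)
  | r _ => none
  | sr i => some i

theorem r_mem_zpowers_r_one (a : ZMod m) : r a ∈ Subgroup.zpowers (r 1 : DihedralGroup m) :=
  ⟨(a.cast : ℤ), by simp only [r_one_zpow, ZMod.intCast_zmod_cast]⟩

theorem closure_r_one_sr (i : ZMod m) : Subgroup.closure {r 1, sr i} = ⊤ := by
  refine eq_top_iff.2 fun d _ => ?_
  have hr : ∀ a : ZMod m, r a ∈ Subgroup.closure {r 1, sr i} := fun a =>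
    Subgroup.zpowers_le.2 (Subgroup.subset_closure (by simp)) (r_mem_zpowers_r_one a)
  cases d with
  | r a => exact hr a
  | sr a =>
    have : sr i * r (a - i) = sr a := by rw [sr_mul_r, add_sub_cancel]
    exact this ▸ Subgroup.mul_mem _ (Subgroup.subset_closure (by simp)) (hr _)

theorem card_setOf_ne_one_reflectionIndex_eq_none [NeZero m] :
    Nat.card {d : DihedralGroup m | d ≠ 1 ∧ reflectionIndex d = none} = m - 1 := by
  have : {d : DihedralGroup m | d ≠ 1 ∧ reflectionIndex d = none} = r '' {0}ᶜ := by
    ext (a | a) <;> simp [reflectionIndex, ← r_zero]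
  rw [this, Nat.card_image_of_injective (fun _ _ => r.inj), Nat.card_coe_set_eq,
    Set.ncard_compl, Set.ncard_singleton, Nat.card_zmod]

theorem card_setOf_ne_one_reflectionIndex_eq_some (i : ZMod m) :
    Nat.card {d : DihedralGroup m | d ≠ 1 ∧ reflectionIndex d = some i} = 1 := by
  have : {d : DihedralGroup m | d ≠ 1 ∧ reflectionIndex d = some i} = {sr i} := by
    ext (a | a) <;> simp [reflectionIndex, ← r_zero]
  rw [this, Nat.card_unique]

theorem exists_ne_one_reflectionIndex_eq [Nontrivial (ZMod m)] (o : Option (ZMod m)) :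
    ∃ d : DihedralGroup m, d ≠ 1 ∧ reflectionIndex d = o := by
  cases o with
  | none => exact ⟨r 1, fun h => one_ne_zero (r.inj h), rfl⟩
  | some i => exact ⟨sr i, nofun, rfl⟩

end DihedralGroup

section Lifts

open DihedralGroup Subgroup

variable {G : Type*} [Group G] {m : ℕ} {π : G →* DihedralGroup m} {x y : G}

theorem commute_of_map_eq_r (hker : π.ker ≤ center G) (hπ : Function.Surjective π)
    {a b : ZMod m} (hx : π x = r a) (hy : π y = r b) : Commute x y := by
  obtain ⟨g, hg⟩ := hπ (r 1)
  exact commute_of_map_mem_zpowers hker g (hx ▸ hg ▸ r_mem_zpowers_r_one a)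
    (hy ▸ hg ▸ r_mem_zpowers_r_one b)

theorem not_commute_of_map_eq_r_of_map_eq_sr (hker : π.ker ≤ center G)
    (hπ : Function.Surjective π) (hxc : x ∉ center G) {a i : ZMod m} (hx : π x = r a)
    (hy : π y = sr i) : ¬Commute x y := by
  obtain ⟨g, hg⟩ := hπ (r 1)
  refine fun hxy => hxc (mem_center_of_commute_of_closure_image_eq_top hker (s := {g, y}) ?_ ?_)
  · rw [Set.image_pair, hg, hy, closure_r_one_sr]
  · rintro z (rfl | rfl)
    exacts [commute_of_map_eq_r hker hπ hx hg, hxy]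

theorem not_commute_of_map_eq_sr_of_ne (hker : π.ker = center G) (hπ : Function.Surjective π)
    {i j : ZMod m} (hx : π x = sr i) (hy : π y = sr j) (hij : i ≠ j) : ¬Commute x y := by
  intro hxy
  have hr : π (x * y⁻¹) = r (j - i) := by rw [map_mul, map_inv, hx, hy, inv_sr, sr_mul_sr]
  have hnc : x * y⁻¹ ∉ center G := by
    rw [← hker, MonoidHom.mem_ker, hr, ← r_zero]
    exact fun h => hij (sub_eq_zero.1 (r.inj h)).symm
  exact not_commute_of_map_eq_r_of_map_eq_sr hker.le hπ hnc hr hx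
    ((Commute.refl x).mul_left hxy.symm.inv_left)

theorem commute_iff_reflectionIndex_eq (hker : π.ker = center G) (hπ : Function.Surjective π)
    (hx : x ∉ center G) (hy : y ∉ center G) :
    Commute x y ↔ reflectionIndex (π x) = reflectionIndex (π y) := by
  rcases hxd : π x with a | i <;> rcases hyd : π y with b | j
  · exact iff_of_true (commute_of_map_eq_r hker.le hπ hxd hyd) rfl
  · exact iff_of_false (not_commute_of_map_eq_r_of_map_eq_sr hker.le hπ hx hxd hyd) nofun
  · exact iff_of_false
      (fun h => not_commute_of_map_eq_r_of_map_eq_sr hker.le hπ hy hyd hxd h.symm) nofun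
  · rw [reflectionIndex, reflectionIndex, Option.some_inj]
    refine ⟨fun hxy => by_contra fun hij =>
      not_commute_of_map_eq_sr_of_ne hker hπ hxd hyd hij hxy, fun hij => ?_⟩
    subst hij
    exact commute_of_map_mem_zpowers hker.le x (mem_zpowers _) (hxd ▸ hyd ▸ mem_zpowers _)

end Lifts

open DihedralGroup SimpleGraph Subgroup

theorem commuting_graph_disjoint_cliques_of_central_quotient_dihedral_general
    (m : ℕ) (hm : 2 ≤ m) (G : Type*) [Group G] (n : ℕ)
    (hZ : Nonempty ((G ⧸ Subgroup.center G) ≃* DihedralGroup m))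
    (hn : Nat.card (Subgroup.center G) = n) :
    Nat.card (commutingGraph G).ConnectedComponent = m + 1 ∧
      (∀ x y : {x : G // x ∉ Subgroup.center G},
        (commutingGraph G).Reachable x y → x = y ∨ (commutingGraph G).Adj x y) ∧
      ∃ c₀ : (commutingGraph G).ConnectedComponent,
        Nat.card {x : {x : G // x ∉ Subgroup.center G} //
            (commutingGraph G).connectedComponentMk x = c₀} = (m - 1) * n ∧
        ∀ c : (commutingGraph G).ConnectedComponent, c ≠ c₀ →
          Nat.card {x : {x : G // x ∉ Subgroup.center G} //
              (commutingGraph G).connectedComponentMk x = c} = n := by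
  obtain ⟨e⟩ := hZ
  have : Fact (1 < m) := ⟨hm⟩
  let π : G →* DihedralGroup m := e.toMonoidHom.comp (QuotientGroup.mk' (center G))
  have hπ : Function.Surjective π := e.surjective.comp (QuotientGroup.mk'_surjective _)
  have hker : π.ker = center G := by simp [π]
  let f : {x : G // x ∉ center G} → Option (ZMod m) := fun x => reflectionIndex (π x)
  have hadj : ∀ x y, (commutingGraph G).Adj x y ↔ x ≠ y ∧ f x = f y := fun x y =>
    and_congr_right' (commute_iff_reflectionIndex_eq hker hπ x.2 y.2)
  have hf : Function.Surjective f := fun o => by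
    obtain ⟨d, hd, hdo⟩ := exists_ne_one_reflectionIndex_eq o
    obtain ⟨x, rfl⟩ := hπ d
    exact ⟨⟨x, by rwa [← hker, MonoidHom.mem_ker]⟩, hdo⟩
  let E := connectedComponentEquivOfAdjIff hadj hf
  have hcard (c) : Nat.card {x // (commutingGraph G).connectedComponentMk x = c} =
      n * Nat.card {d : DihedralGroup m | d ≠ 1 ∧ reflectionIndex d = E c} := by
    rw [card_connectedComponentMk_eq_of_adj_iff hadj hf, ← hn]
    exact MonoidHom.card_subtype_compl_ker hker hπ (reflectionIndex · = E c)
  refine ⟨by rw [Nat.card_congr E, Finite.card_option, Nat.card_zmod],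
    fun x y => eq_or_adj_of_reachable_of_adj_iff hadj, E.symm none, ?_, fun c hc => ?_⟩
  · rw [hcard, E.apply_symm_apply, card_setOf_ne_one_reflectionIndex_eq_none, mul_comm]
  · obtain ⟨i, hi⟩ := Option.ne_none_iff_exists'.1 fun h => hc (E.symm_apply_eq.2 h.symm).symm
    rw [hcard, hi, card_setOf_ne_one_reflectionIndex_eq_some, mul_one]

theorem commuting_graph_disjoint_cliques_of_central_quotient_dihedral
    (m : ℕ) (hm : 2 ≤ m) (G : Type*) [Group G] [Finite G] (n : ℕ)
    (hZ : Nonempty ((G ⧸ Subgroup.center G) ≃* DihedralGroup m))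
    (hn : Nat.card (Subgroup.center G) = n) :
    Nat.card (commutingGraph G).ConnectedComponent = m + 1 ∧
      (∀ x y : {x : G // x ∉ Subgroup.center G},
        (commutingGraph G).Reachable x y → x = y ∨ (commutingGraph G).Adj x y) ∧
      ∃ c₀ : (commutingGraph G).ConnectedComponent,
        Nat.card {x : {x : G // x ∉ Subgroup.center G} //
            (commutingGraph G).connectedComponentMk x = c₀} = (m - 1) * n ∧
        ∀ c : (commutingGraph G).ConnectedComponent, c ≠ c₀ →
          Nat.card {x : {x : G // x ∉ Subgroup.center G} //
              (commutingGraph G).connectedComponentMk x = c} = n :=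
  commuting_graph_disjoint_cliques_of_central_quotient_dihedral_general m hm G n hZ hn
end

section
/- Let m ≥ 2 and let G be a finite group whose central quotient G/Z(G) is isomorphic to the dihedral group D_{2m} of order 2m. Then for every non-central element x of G, the centralizer C_G(x) is an abelian subgroup of G whose order is either m·|Z(G)| or 2·|Z(G)|. -/
/-!
Let `A` be the preimage of the rotation subgroup under `G → G ⧸ Z(G) ≃* D_{2m}`. It has index 2,
and it is abelian because `A ⧸ Z(G)` is cyclic. An element commuting with all of `A` and with one
element outside `A` is central. Hence for non-central `x ∈ A` nothing outside `A` centralizes `x`,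
so `C_G(x) = A`; and for `x ∉ A` we get `C_G(x) ⊓ A = Z(G)`, a subgroup of index 2 in `C_G(x)`,
so `C_G(x) = Z(G) ∪ x Z(G)`.
-/

namespace DihedralGroup

variable {n : ℕ}

def rotations (n : ℕ) : Subgroup (DihedralGroup n) := Subgroup.zpowers (r 1)

instance : IsCyclic (rotations n) := Subgroup.isCyclic_zpowers _

theorem r_mem_rotations (i : ZMod n) : r i ∈ rotations n :=
  ⟨(i.cast : ℤ), by simp⟩

theorem sr_notMem_rotations (i : ZMod n) : sr i ∉ rotations n := by
  rintro ⟨k, hk⟩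
  simp at hk

theorem index_rotations : (rotations n).index = 2 := by
  refine Subgroup.index_eq_two_iff.mpr ⟨sr 0, fun g => ?_⟩
  cases g with
  | r i => simp [r_mul_sr, r_mem_rotations, sr_notMem_rotations]
  | sr i => simp [sr_mul_sr, r_mem_rotations, sr_notMem_rotations]

end DihedralGroup

namespace Subgroup

variable {G G' : Type*} [Group G] [Group G']

theorem isMulCommutative_comap_of_ker_le_center {f : G →* G'} (hf : f.ker ≤ center G)
    (K : Subgroup G') [IsCyclic K] : IsMulCommutative (K.comap f) := by
  refine (f.subgroupComap K).isMulCommutative_of_isCyclic_of_ker_le_center fun a ha => ?_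
  have hfa : f a = 1 := congrArg Subtype.val ha
  exact mem_center_iff.mpr fun b => Subtype.ext <| mem_center_iff.mp (hf hfa) b

variable {A C : Subgroup G}

theorem mem_center_of_commute_of_index_eq_two (hA : A.index = 2) {c g : G}
    (hcA : ∀ a ∈ A, Commute c a) (hg : g ∉ A) (hcg : Commute c g) : c ∈ center G := by
  refine mem_center_iff.mpr fun y => (?_ : Commute c y).symm.eq
  by_cases hy : y ∈ A
  · exact hcA y hy
  · have hgy : g⁻¹ * y ∈ A := by simp [mul_mem_iff_of_index_two hA, hg, hy]
    simpa using hcg.mul_right (hcA _ hgy)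

theorem centralizer_eq_of_mem_of_index_eq_two (hA : A.index = 2) [IsMulCommutative A] {x : G}
    (hx : x ∉ center G) (hxA : x ∈ A) : centralizer {x} = A := by
  refine le_antisymm (fun c hc => ?_) fun a ha => ?_
  · by_contra hcA
    exact hx <| mem_center_of_commute_of_index_eq_two hA (fun a ha => setLike_mul_comm hxA ha)
      hcA (mem_centralizer_singleton_iff.mp hc).symm
  · exact mem_centralizer_singleton_iff.mpr (setLike_mul_comm ha hxA)

theorem centralizer_inf_le_center_of_notMem (hA : A.index = 2) [IsMulCommutative A] {x : G}
    (hxA : x ∉ A) : centralizer {x} ⊓ A ≤ center G := fun _ ⟨hcx, hcA⟩ =>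
  mem_center_of_commute_of_index_eq_two hA (fun _ ha => setLike_mul_comm hcA ha) hxA
    (mem_centralizer_singleton_iff.mp hcx)

theorem isMulCommutative_of_inf_le_center (hA : A.index = 2) (hC : C ⊓ A ≤ center G) :
    IsMulCommutative C := by
  refine .of_setLike_mul_comm fun a ha b hb => ?_
  by_cases haA : a ∈ A
  · exact (mem_center_iff.mp (hC ⟨ha, haA⟩) b).symm
  by_cases hbA : b ∈ A
  · exact mem_center_iff.mp (hC ⟨hb, hbA⟩) a
  have hab : a⁻¹ * b ∈ C ⊓ A :=
    ⟨C.mul_mem (C.inv_mem ha) hb, by simp [mul_mem_iff_of_index_two hA, haA, hbA]⟩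
  have h : Commute a (a⁻¹ * b) := mem_center_iff.mp (hC hab) a
  simpa using ((Commute.refl a).mul_right h).eq

theorem card_eq_two_mul_card_inf_of_index_eq_two (hA : A.index = 2) (hC : ¬C ≤ A) :
    Nat.card C = 2 * Nat.card (C ⊓ A : Subgroup G) := by
  have : A.Normal := normal_of_index_eq_two hA
  have hrel : A.relIndex C = 2 := by
    have hdvd : A.relIndex C ∣ 2 := hA ▸ relIndex_dvd_index_of_normal A C
    rcases (Nat.dvd_prime Nat.prime_two).mp hdvd with h | h
    · exact absurd (relIndex_eq_one.mp h) hC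
    · exact h
  rw [← card_mul_index (A.subgroupOf C), ← relIndex, hrel, ← inf_subgroupOf_left A C,
    Nat.card_congr (subgroupOfEquivOfLe (inf_le_left : C ⊓ A ≤ C)).toEquiv, mul_comm]

end Subgroup

section CentralQuotient

variable {G : Type*} [Group G] {m : ℕ}

theorem card_eq_of_central_quotient_dihedral (φ : G ⧸ Subgroup.center G ≃* DihedralGroup m) :
    Nat.card G = 2 * m * Nat.card (Subgroup.center G) := by
  rw [Subgroup.card_eq_card_quotient_mul_card_subgroup (Subgroup.center G),
    Nat.card_congr φ.toEquiv, DihedralGroup.nat_card]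

theorem exists_index_two_of_central_quotient_dihedral
    (φ : G ⧸ Subgroup.center G ≃* DihedralGroup m) :
    ∃ A : Subgroup G, A.index = 2 ∧ Subgroup.center G ≤ A ∧ IsMulCommutative A := by
  let ψ : G →* DihedralGroup m :=
    (φ : G ⧸ Subgroup.center G →* DihedralGroup m).comp (QuotientGroup.mk' _)
  have hker : ψ.ker = Subgroup.center G := by
    rw [MonoidHom.ker_mulEquiv_comp, QuotientGroup.ker_mk']
  have hψ : Function.Surjective ψ := φ.surjective.comp (QuotientGroup.mk'_surjective _)
  refine ⟨(DihedralGroup.rotations m).comap ψ, ?_, hker ▸ ψ.ker_le_comap _, ?_⟩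
  · rw [Subgroup.index_comap_of_surjective _ hψ, DihedralGroup.index_rotations]
  · exact Subgroup.isMulCommutative_comap_of_ker_le_center hker.le _

end CentralQuotient

theorem centralizer_abelian_of_central_quotient_dihedral_general
    (m : ℕ) (G : Type*) [Group G]
    (hZ : Nonempty ((G ⧸ Subgroup.center G) ≃* DihedralGroup m))
    (x : G) (hx : x ∉ Subgroup.center G) :
    (∀ a ∈ Subgroup.centralizer {x}, ∀ b ∈ Subgroup.centralizer {x}, a * b = b * a) ∧
      (Nat.card (Subgroup.centralizer {x} : Subgroup G) =
          m * Nat.card (Subgroup.center G) ∨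
        Nat.card (Subgroup.centralizer {x} : Subgroup G) =
          2 * Nat.card (Subgroup.center G)) := by
  obtain ⟨φ⟩ := hZ
  obtain ⟨A, hA, hZA, hAcomm⟩ := exists_index_two_of_central_quotient_dihedral φ
  by_cases hxA : x ∈ A
  · rw [Subgroup.centralizer_eq_of_mem_of_index_eq_two hA hx hxA]
    refine ⟨fun a ha b hb => setLike_mul_comm ha hb, Or.inl ?_⟩
    have hG := card_eq_of_central_quotient_dihedral φ
    rw [← A.card_mul_index, hA] at hG
    linarith
  · have hCA : Subgroup.centralizer {x} ⊓ A = Subgroup.center G :=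
      le_antisymm (Subgroup.centralizer_inf_le_center_of_notMem hA hxA)
        (le_inf (Subgroup.center_le_centralizer _) hZA)
    have hCcomm := Subgroup.isMulCommutative_of_inf_le_center hA hCA.le
    have hCA' : ¬Subgroup.centralizer {x} ≤ A := fun h =>
      hxA (h (Subgroup.mem_centralizer_singleton_iff.mpr rfl))
    refine ⟨fun a ha b hb => setLike_mul_comm ha hb, Or.inr ?_⟩
    rw [Subgroup.card_eq_two_mul_card_inf_of_index_eq_two hA hCA', hCA]

theorem centralizer_abelian_of_central_quotient_dihedral
    (m : ℕ) (hm : 2 ≤ m) (G : Type*) [Group G] [Finite G]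
    (hZ : Nonempty ((G ⧸ Subgroup.center G) ≃* DihedralGroup m))
    (x : G) (hx : x ∉ Subgroup.center G) :
    (∀ a ∈ Subgroup.centralizer {x}, ∀ b ∈ Subgroup.centralizer {x}, a * b = b * a) ∧
      (Nat.card (Subgroup.centralizer {x} : Subgroup G) =
          m * Nat.card (Subgroup.center G) ∨
        Nat.card (Subgroup.centralizer {x} : Subgroup G) =
          2 * Nat.card (Subgroup.center G)) :=
  centralizer_abelian_of_central_quotient_dihedral_general m G hZ x hx
end

section
/- Let m > 2 and n ≥ 1, and let G be a group of order 2mn generated by elements a and b satisfying a^m = 1, b^(2n) = 1, and b·a·b⁻¹ = a⁻¹ (the metacyclic group M_{2mn}). If m is odd, then Z(G) = ⟨b²⟩, |Z(G)| = n, and G/Z(G) is isomorphic to the dihedral group of order 2m; if m is even, then Z(G) = ⟨b²⟩ ∪ a^(m/2)·⟨b²⟩, |Z(G)| = 2n, and G/Z(G) is isomorphic to the dihedral group of order m. -/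
open scoped Pointwise

lemma aux_pow_mod {Q : Type*} [Group Q] {k : ℕ} {x : Q} (hx : x ^ k = 1) (t : ℕ) :
    x ^ (t % k) = x ^ t := by
  conv_rhs => rw [← Nat.div_add_mod t k]
  rw [pow_add, pow_mul, hx, one_pow, one_mul]

lemma aux_pow_val {Q : Type*} [Group Q] {k : ℕ} [NeZero k] {x : Q}
    (hx : x ^ k = 1) (z : ℤ) : x ^ z = x ^ ((z : ZMod k)).val := by
  have h1 : ((k : ℤ)) ∣ z - ((z : ZMod k).val : ℤ) := by
    rw [← ZMod.intCast_zmod_eq_zero_iff_dvd]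
    push_cast
    simp [ZMod.natCast_val, ZMod.cast_id]
  obtain ⟨c, hc⟩ := h1
  have hz : z = ((z : ZMod k).val : ℤ) + k * c := by linarith
  have hxk : x ^ (k : ℤ) = 1 := by rw [zpow_natCast, hx]
  conv_lhs => rw [hz]
  rw [zpow_add, zpow_natCast, zpow_mul, hxk, one_zpow, mul_one]

lemma aux_dihedral {Q : Type*} [Group Q] [Finite Q] (k : ℕ) (hk : 1 < k)
    (α β : Q) (hα : α ^ k = 1) (hβ : β ^ 2 = 1) (hr : β * α * β⁻¹ = α⁻¹)
    (hgen : Subgroup.closure ({α, β} : Set Q) = ⊤)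
    (hcard : Nat.card Q = 2 * k) : Nonempty (Q ≃* DihedralGroup k) := by
  haveI : NeZero k := ⟨by omega⟩
  haveI : Fact (1 < k) := ⟨hk⟩
  set χ : ZMod k → Q := fun i => α ^ i.val with hχ
  have hadd : ∀ i j : ZMod k, χ (i + j) = χ i * χ j := by
    intro i j
    simp only [hχ]
    rw [ZMod.val_add, aux_pow_mod hα, pow_add]
  have hβα : ∀ i : ZMod k, β * χ i = χ (-i) * β := by
    intro i
    have h1 : β * α ^ ((i.val : ℤ)) * β⁻¹ = α ^ (-(i.val : ℤ)) := by
      rw [← conj_zpow, hr, inv_zpow, ← zpow_neg]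
    have h2 : β * α ^ ((i.val : ℤ)) = α ^ (-(i.val : ℤ)) * β := by
      rw [← h1]; group
    have h3 : α ^ (-(i.val : ℤ)) = χ (-i) := by
      rw [aux_pow_val hα]
      simp only [hχ]
      congr 2
      push_cast
      simp [ZMod.natCast_val, ZMod.cast_id]
    rw [← h3, ← h2, zpow_natCast]
  have hβα' : ∀ i : ZMod k, χ i * β = β * χ (-i) := by
    intro i
    rw [hβα, neg_neg]
  let ψf : DihedralGroup k → Q := fun x => match x with
    | DihedralGroup.r i => χ i
    | DihedralGroup.sr i => β * χ i
  have hψmul : ∀ x y, ψf (x * y) = ψf x * ψf y := by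
    rintro (i | i) (j | j)
    · show χ (i + j) = χ i * χ j
      exact hadd i j
    · show β * χ (j - i) = χ i * (β * χ j)
      rw [← mul_assoc, hβα' i, mul_assoc, ← hadd, neg_add_eq_sub]
    · show β * χ (i + j) = β * χ i * χ j
      rw [mul_assoc, hadd]
    · show χ (j - i) = (β * χ i) * (β * χ j)
      calc χ (j - i) = χ (-i + j) := by rw [neg_add_eq_sub]
        _ = β ^ 2 * (χ (-i) * χ j) := by rw [hβ, one_mul, hadd]
        _ = β * (β * χ (-i)) * χ j := by rw [pow_two]; group
        _ = β * (χ i * β) * χ j := by rw [hβα' i]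
        _ = (β * χ i) * (β * χ j) := by group
  let ψ : DihedralGroup k →* Q :=
    { toFun := ψf
      map_one' := by
        show χ 0 = 1
        simp [hχ, ZMod.val_zero]
      map_mul' := hψmul }
  have hψr1 : ψ (DihedralGroup.r 1) = α := by
    show χ 1 = α
    simp [hχ, ZMod.val_one]
  have hψsr0 : ψ (DihedralGroup.sr 0) = β := by
    show β * χ 0 = β
    simp [hχ, ZMod.val_zero]
  have hsurj : Function.Surjective ψ := by
    rw [← MonoidHom.range_eq_top, ← top_le_iff, ← hgen, Subgroup.closure_le]
    intro x hx
    simp only [Set.mem_insert_iff, Set.mem_singleton_iff] at hx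
    rcases hx with rfl | rfl
    · exact ⟨DihedralGroup.r 1, hψr1⟩
    · exact ⟨DihedralGroup.sr 0, hψsr0⟩
  have hbij : Function.Bijective ψ :=
    (Nat.bijective_iff_surjective_and_card ψ).mpr
      ⟨hsurj, by rw [DihedralGroup.nat_card, hcard]⟩
  exact ⟨(MulEquiv.ofBijective ψ hbij).symm⟩

theorem center_of_metacyclic
    (m n : ℕ) (hm : 2 < m) (hn : 1 ≤ n)
    (G : Type*) [Group G] [Finite G] (a b : G)
    (hcard : Nat.card G = 2 * m * n)
    (ha : a ^ m = 1) (hb : b ^ (2 * n) = 1) (hrel : b * a * b⁻¹ = a⁻¹)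
    (hgen : Subgroup.closure ({a, b} : Set G) = ⊤) :
    (Odd m →
      Subgroup.center G = Subgroup.zpowers (b ^ 2) ∧
      Nat.card (Subgroup.center G) = n ∧
      Nonempty ((G ⧸ Subgroup.center G) ≃* DihedralGroup m)) ∧
    (Even m →
      (Subgroup.center G : Set G) =
          ((Subgroup.zpowers (b ^ 2) : Subgroup G) : Set G) ∪
            a ^ (m / 2) • ((Subgroup.zpowers (b ^ 2) : Subgroup G) : Set G) ∧
      Nat.card (Subgroup.center G) = 2 * n ∧
      Nonempty ((G ⧸ Subgroup.center G) ≃* DihedralGroup (m / 2))) := by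
  haveI hNZm : NeZero m := ⟨by omega⟩
  haveI hNZ2n : NeZero (2 * n) := ⟨by omega⟩
  -- basic conjugation lemmas
  have hconj : ∀ z : ℤ, b * a ^ z * b⁻¹ = a ^ (-z) := by
    intro z
    rw [← conj_zpow, hrel, inv_zpow, ← zpow_neg]
  have hconj' : ∀ z : ℤ, b⁻¹ * a ^ z * b = a ^ (-z) := by
    intro z
    have h := hconj (-z)
    rw [neg_neg] at h
    calc b⁻¹ * a ^ z * b = b⁻¹ * (b * a ^ (-z) * b⁻¹) * b := by rw [h]
      _ = a ^ (-z) := by group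
  have hmove : ∀ z : ℤ, b * a ^ z = a ^ (-z) * b := by
    intro z
    rw [← hconj z]; group
  -- zpowers a is normal
  have hAnormal : (Subgroup.zpowers a).Normal := by
    rw [← Subgroup.normalizer_eq_top_iff, ← top_le_iff, ← hgen, Subgroup.closure_le]
    intro x hx
    simp only [Set.mem_insert_iff, Set.mem_singleton_iff] at hx
    rcases hx with rfl | rfl
    · exact Subgroup.le_normalizer (Subgroup.mem_zpowers x)
    · rw [SetLike.mem_coe, Subgroup.mem_normalizer_iff]
      intro h
      constructor
      · intro hh
        obtain ⟨z, hz⟩ := Subgroup.mem_zpowers_iff.mp hh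
        exact Subgroup.mem_zpowers_iff.mpr ⟨-z, by rw [← hz, hconj]⟩
      · intro hh
        obtain ⟨z, hz⟩ := Subgroup.mem_zpowers_iff.mp hh
        have hx : h = a ^ (-z) := by
          rw [← hconj' z, hz]; group
        rw [hx]
        exact Subgroup.mem_zpowers_iff.mpr ⟨-z, rfl⟩
  -- decomposition of elements
  have hdecomp : ∀ g : G, ∃ (i : ZMod m) (j : ZMod (2 * n)),
      g = a ^ i.val * b ^ j.val := by
    intro g
    have htop : Subgroup.zpowers a ⊔ Subgroup.zpowers b = ⊤ := by
      rw [← top_le_iff, ← hgen, Subgroup.closure_le]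
      intro x hx
      simp only [Set.mem_insert_iff, Set.mem_singleton_iff] at hx
      rcases hx with rfl | rfl
      · exact Subgroup.mem_sup_left (Subgroup.mem_zpowers x)
      · exact Subgroup.mem_sup_right (Subgroup.mem_zpowers x)
    have hg : g ∈ ((Subgroup.zpowers a : Subgroup G) : Set G) *
        ((Subgroup.zpowers b : Subgroup G) : Set G) := by
      rw [← Subgroup.normal_mul, htop]
      trivial
    obtain ⟨x, hx, y, hy, hxy⟩ := hg
    obtain ⟨zi, hzi⟩ := Subgroup.mem_zpowers_iff.mp hx
    obtain ⟨zj, hzj⟩ := Subgroup.mem_zpowers_iff.mp hy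
    refine ⟨(zi : ZMod m), (zj : ZMod (2 * n)), ?_⟩
    rw [← aux_pow_val ha, ← aux_pow_val hb, hzi, hzj]
    exact hxy.symm
  -- the decomposition is unique (cardinality)
  have hfbij : Function.Bijective
      (fun p : ZMod m × ZMod (2 * n) => a ^ p.1.val * b ^ p.2.val) := by
    rw [Nat.bijective_iff_surjective_and_card]
    constructor
    · intro g
      obtain ⟨i, j, hij⟩ := hdecomp g
      exact ⟨(i, j), hij.symm⟩
    · rw [Nat.card_prod, Nat.card_zmod, Nat.card_zmod, hcard]
      ring
  have huniq : ∀ (i k : ZMod m) (j l : ZMod (2 * n)),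
      a ^ i.val * b ^ j.val = a ^ k.val * b ^ l.val → i = k ∧ j = l := by
    intro i k j l h
    have h2 := hfbij.1 (a₁ := (i, j)) (a₂ := (k, l)) h
    exact ⟨congrArg Prod.fst h2, congrArg Prod.snd h2⟩
  -- order of a and b
  have hsmalla : ∀ d : ℕ, d < m → a ^ d = 1 → d = 0 := by
    intro d hd h1
    have h2 : a ^ ((d : ZMod m)).val * b ^ ((0 : ZMod (2 * n))).val
        = a ^ ((0 : ZMod m)).val * b ^ ((0 : ZMod (2 * n))).val := by
      rw [ZMod.val_cast_of_lt hd]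
      simp [h1]
    have h3 : (d : ZMod m) = (0 : ZMod m) := (huniq _ _ _ _ h2).1
    rw [ZMod.natCast_eq_zero_iff] at h3
    exact Nat.eq_zero_of_dvd_of_lt h3 hd
  have hsmallb : ∀ d : ℕ, d < 2 * n → b ^ d = 1 → d = 0 := by
    intro d hd h1
    have h2 : a ^ ((0 : ZMod m)).val * b ^ ((d : ZMod (2 * n))).val
        = a ^ ((0 : ZMod m)).val * b ^ ((0 : ZMod (2 * n))).val := by
      rw [ZMod.val_cast_of_lt hd]
      simp [h1]
    have h3 : (d : ZMod (2 * n)) = (0 : ZMod (2 * n)) := (huniq _ _ _ _ h2).2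
    rw [ZMod.natCast_eq_zero_iff] at h3
    exact Nat.eq_zero_of_dvd_of_lt h3 hd
  have horda : orderOf a = m := by
    have hdvd : orderOf a ∣ m := orderOf_dvd_of_pow_eq_one ha
    rcases lt_or_eq_of_le (Nat.le_of_dvd (by omega) hdvd) with hlt | heq
    · have h0 := hsmalla _ hlt (pow_orderOf_eq_one a)
      have h1 : orderOf a ≠ 0 := (orderOf_pos a).ne'
      omega
    · exact heq
  have hordb : orderOf b = 2 * n := by
    have hdvd : orderOf b ∣ 2 * n := orderOf_dvd_of_pow_eq_one hb
    rcases lt_or_eq_of_le (Nat.le_of_dvd (by omega) hdvd) with hlt | heq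
    · have h0 := hsmallb _ hlt (pow_orderOf_eq_one b)
      have h1 : orderOf b ≠ 0 := (orderOf_pos b).ne'
      omega
    · exact heq
  -- cross
  have hcross : ∀ (i : ZMod m) (j : ZMod (2 * n)),
      a ^ i.val = b ^ j.val → i = 0 ∧ j = 0 := by
    intro i j h
    have h2 : a ^ i.val * b ^ ((0 : ZMod (2 * n))).val
        = a ^ ((0 : ZMod m)).val * b ^ j.val := by
      simp [h]
    obtain ⟨h3, h4⟩ := huniq _ _ _ _ h2
    exact ⟨h3, h4.symm⟩
  -- commuting facts
  have hb2a : Commute (b ^ 2) a := by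
    have h1 : b ^ 2 * a * (b ^ 2)⁻¹ = a := by
      calc b ^ 2 * a * (b ^ 2)⁻¹ = b * (b * a * b⁻¹) * b⁻¹ := by rw [pow_two]; group
        _ = b * a⁻¹ * b⁻¹ := by rw [hrel]
        _ = (b * a * b⁻¹)⁻¹ := by group
        _ = a := by rw [hrel, inv_inv]
    show b ^ 2 * a = a * b ^ 2
    calc b ^ 2 * a = (b ^ 2 * a * (b ^ 2)⁻¹) * b ^ 2 := by group
      _ = a * b ^ 2 := by rw [h1]
  have hcentral_of : ∀ z : G, Commute z a → Commute z b → z ∈ Subgroup.center G := by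
    intro z hca hcb
    rw [Subgroup.mem_center_iff]
    intro g
    obtain ⟨i, j, rfl⟩ := hdecomp g
    exact Commute.mul_left ((hca.symm).pow_left _) ((hcb.symm).pow_left _)
  have hb2c : b ^ 2 ∈ Subgroup.center G :=
    hcentral_of _ hb2a ((Commute.refl b).pow_left 2)
  -- center characterization
  have hOddJ : ∀ J : ℕ, Odd J → b ^ J * a = a⁻¹ * b ^ J := by
    intro J hJ
    obtain ⟨t, ht⟩ := hJ
    have hbJ : b ^ J = (b ^ 2) ^ t * b := by
      rw [← pow_mul, ← pow_succ, ht]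
    have h1 : b * a = a⁻¹ * b := by
      rw [← hrel]; group
    have c : Commute ((b ^ 2) ^ t) a⁻¹ := (hb2a.pow_left t).inv_right
    rw [hbJ, mul_assoc, h1, ← mul_assoc, c.eq, mul_assoc]
  have hcenter_char : ∀ z ∈ Subgroup.center G, ∃ (I t : ℕ),
      z = a ^ I * (b ^ 2) ^ t ∧ (I = 0 ∨ (Even m ∧ I = m / 2)) := by
    intro z hz
    obtain ⟨i, j, rfl⟩ := hdecomp z
    set I := i.val with hI
    set J := j.val with hJ
    have hJeven : Even J := by
      by_contra hodd
      rw [Nat.not_even_iff_odd] at hodd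
      have h1 : a * (a ^ I * b ^ J) = (a ^ I * b ^ J) * a :=
        Subgroup.mem_center_iff.mp hz a
      have h2 : (a ^ I * b ^ J) * a = a ^ I * (a⁻¹ * b ^ J) := by
        rw [mul_assoc, hOddJ J hodd]
      have h3 : a * a ^ I * b ^ J = a ^ I * a⁻¹ * b ^ J := by
        rw [mul_assoc, h1, h2, ← mul_assoc]
      have h6 : a * a ^ I = a ^ I * a⁻¹ := mul_right_cancel h3
      have h7 : a ^ I * a = a ^ I * a⁻¹ := by
        rw [← h6]
        exact ((Commute.refl a).pow_left I).eq
      have h8 : a = a⁻¹ := mul_left_cancel h7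
      have h4 : a ^ 2 = 1 := by
        rw [pow_two]
        nth_rewrite 2 [h8]
        exact mul_inv_cancel a
      have h5 : orderOf a ∣ 2 := orderOf_dvd_of_pow_eq_one h4
      rw [horda] at h5
      have := Nat.le_of_dvd (by norm_num) h5
      omega
    obtain ⟨t, ht⟩ := hJeven
    have hbJ2 : b ^ J = (b ^ 2) ^ t := by
      rw [← pow_mul]
      congr 1
      omega
    -- condition from commuting with b
    have h1 : b * (a ^ I * b ^ J) = (a ^ I * b ^ J) * b :=
      Subgroup.mem_center_iff.mp hz b
    have h2 : b * a ^ I = a ^ (-(I : ℤ)) * b := by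
      have := hmove (I : ℤ)
      rwa [zpow_natCast] at this
    have e1 : b * (a ^ I * b ^ J) = a ^ (-(I : ℤ)) * b ^ (J + 1) := by
      rw [← mul_assoc, h2, mul_assoc, ← pow_succ']
    have e2 : (a ^ I * b ^ J) * b = a ^ ((I : ℤ)) * b ^ (J + 1) := by
      rw [mul_assoc, ← pow_succ, zpow_natCast]
    have h3 : a ^ (-(I : ℤ)) = a ^ ((I : ℤ)) :=
      mul_right_cancel (e1.symm.trans (h1.trans e2))
    have h4 : a ^ (2 * I) = 1 := by
      have h5 : a ^ ((I : ℤ) + (I : ℤ)) = 1 := by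
        rw [zpow_add]
        nth_rewrite 1 [← h3]
        rw [← zpow_add, neg_add_cancel, zpow_zero]
      have h6 : ((2 * I : ℕ) : ℤ) = (I : ℤ) + (I : ℤ) := by push_cast; ring
      rw [← zpow_natCast, h6, h5]
    have hdvd2I : m ∣ 2 * I := by
      rw [← horda]
      exact orderOf_dvd_of_pow_eq_one h4
    have hIlt : I < m := ZMod.val_lt i
    have hIcases : I = 0 ∨ (Even m ∧ I = m / 2) := by
      obtain ⟨c, hc⟩ := hdvd2I
      have hc2 : c < 2 := by nlinarith
      interval_cases c
      · left; omega
      · right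
        exact ⟨⟨I, by omega⟩, by omega⟩
    exact ⟨I, t, by rw [hbJ2], hIcases⟩
  -- card of zpowers b^2
  have hcardzb : Nat.card (Subgroup.zpowers (b ^ 2)) = n := by
    rw [Nat.card_zpowers, orderOf_pow' b (two_ne_zero), hordb]
    have hgcd : Nat.gcd (2 * n) 2 = 2 := by
      rw [Nat.gcd_comm]
      exact Nat.gcd_eq_left ⟨n, rfl⟩
    rw [hgcd]
    omega
  -- quotient generator setup
  set π := QuotientGroup.mk' (Subgroup.center G) with hπ
  have hπsurj : Function.Surjective π := QuotientGroup.mk'_surjective _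
  have hgenQ : Subgroup.closure ({π a, π b} : Set (G ⧸ Subgroup.center G)) = ⊤ := by
    rw [← Set.image_pair, ← MonoidHom.map_closure, hgen]
    exact Subgroup.map_top_of_surjective π hπsurj
  have hrelQ : π b * π a * (π b)⁻¹ = (π a)⁻¹ := by
    rw [← map_inv, ← map_mul, ← map_mul, hrel, map_inv]
  constructor
  · -- odd case
    intro hmodd
    have hZ : Subgroup.center G = Subgroup.zpowers (b ^ 2) := by
      apply le_antisymm
      · intro z hz
        obtain ⟨I, t, hzeq, hIc⟩ := hcenter_char z hz
        have hI0 : I = 0 := by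
          rcases hIc with h | ⟨hme, _⟩
          · exact h
          · exact absurd hmodd (Nat.not_odd_iff_even.mpr hme)
        rw [hzeq, hI0, pow_zero, one_mul]
        exact Subgroup.mem_zpowers_iff.mpr ⟨t, zpow_natCast _ t⟩
      · exact Subgroup.zpowers_le.mpr hb2c
    have hcZ : Nat.card (Subgroup.center G) = n := by rw [hZ]; exact hcardzb
    refine ⟨hZ, hcZ, ?_⟩
    have hQcard : Nat.card (G ⧸ Subgroup.center G) = 2 * m := by
      have h1 := Subgroup.card_eq_card_quotient_mul_card_subgroup (Subgroup.center G)
      rw [hcard, hcZ] at h1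
      have h2 : Nat.card (G ⧸ Subgroup.center G) * n = (2 * m) * n := by
        rw [← h1]; try ring
      exact Nat.eq_of_mul_eq_mul_right (by omega) h2
    exact aux_dihedral m (by omega) (π a) (π b)
      (by rw [← map_pow, ha, map_one])
      (by rw [← map_pow]; exact (QuotientGroup.eq_one_iff _).mpr hb2c)
      hrelQ hgenQ hQcard
  · -- even case
    intro hme
    have hm2 : m % 2 = 0 := Nat.even_iff.mp hme
    have hamc : a ^ (m / 2) ∈ Subgroup.center G := by
      have hsq : a ^ (m / 2) * a ^ (m / 2) = 1 := by
        rw [← pow_add]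
        have hadd : m / 2 + m / 2 = m := by omega
        rw [hadd, ha]
      have hinv : (a ^ (m / 2))⁻¹ = a ^ (m / 2) :=
        inv_eq_of_mul_eq_one_right hsq
      apply hcentral_of
      · exact (Commute.refl a).pow_left _
      · show a ^ (m / 2) * b = b * a ^ (m / 2)
        have h3 : b * a ^ (m / 2) = (a ^ (m / 2))⁻¹ * b := by
          have h4 := hmove ((m / 2 : ℕ) : ℤ)
          rwa [zpow_natCast, zpow_neg, zpow_natCast] at h4
        rw [h3, hinv]
    have hnm : a ^ (m / 2) ∉ Subgroup.zpowers (b ^ 2) := by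
      intro hmem
      obtain ⟨z, hzz⟩ := Subgroup.mem_zpowers_iff.mp hmem
      have hz2 : b ^ ((((2:ℕ) : ℤ)) * z) = a ^ (m / 2) := by
        rw [zpow_mul, zpow_natCast, hzz]
      have h1 : a ^ (((m / 2 : ℕ) : ZMod m)).val = b ^ ((((((2:ℕ) : ℤ)) * z : ℤ) : ZMod (2 * n))).val := by
        rw [ZMod.val_cast_of_lt (by omega : m / 2 < m), ← aux_pow_val hb, hz2]
      obtain ⟨hI, _⟩ := hcross _ _ h1
      rw [ZMod.natCast_eq_zero_iff] at hI
      have := Nat.le_of_dvd (by omega) hI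
      omega
    have hsetZ : (Subgroup.center G : Set G) =
        ((Subgroup.zpowers (b ^ 2) : Subgroup G) : Set G) ∪
          a ^ (m / 2) • ((Subgroup.zpowers (b ^ 2) : Subgroup G) : Set G) := by
      ext x
      constructor
      · intro hx
        obtain ⟨I, t, hxeq, hIc⟩ := hcenter_char x hx
        rcases hIc with h0 | ⟨_, hm2'⟩
        · left
          rw [hxeq, h0, pow_zero, one_mul]
          exact Subgroup.mem_zpowers_iff.mpr ⟨t, zpow_natCast _ t⟩
        · right
          rw [hxeq, hm2']
          exact Set.smul_mem_smul_set (Subgroup.mem_zpowers_iff.mpr ⟨t, zpow_natCast _ t⟩)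
      · intro hx
        rcases hx with hx | hx
        · exact Subgroup.zpowers_le.mpr hb2c hx
        · obtain ⟨y, hy, rfl⟩ := hx
          show a ^ (m / 2) * y ∈ Subgroup.center G
          exact Subgroup.mul_mem _ hamc (Subgroup.zpowers_le.mpr hb2c hy)
    have hdisj : Disjoint ((Subgroup.zpowers (b ^ 2) : Subgroup G) : Set G)
        (a ^ (m / 2) • ((Subgroup.zpowers (b ^ 2) : Subgroup G) : Set G)) := by
      rw [Set.disjoint_left]
      rintro x hx ⟨y, hy, rfl⟩
      apply hnm
      have h1 : a ^ (m / 2) = (a ^ (m / 2) • y) * y⁻¹ := by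
        rw [smul_eq_mul]; group
      rw [h1]
      exact Subgroup.mul_mem _ hx (Subgroup.inv_mem _ hy)
    have hc2 : Nat.card (Subgroup.center G) = 2 * n := by
      have h1 : Nat.card (Subgroup.center G) = ((Subgroup.center G : Set G)).ncard := by
        rw [← Nat.card_coe_set_eq]
        rfl
      rw [h1, hsetZ, Set.ncard_union_eq hdisj (Set.toFinite _) (Set.toFinite _),
        Set.ncard_smul_set]
      have h2 : ((Subgroup.zpowers (b ^ 2) : Subgroup G) : Set G).ncard = n := by
        rw [← Nat.card_coe_set_eq]
        exact hcardzb
      rw [h2]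
      omega
    refine ⟨hsetZ, hc2, ?_⟩
    have hQcard : Nat.card (G ⧸ Subgroup.center G) = 2 * (m / 2) := by
      have h1 := Subgroup.card_eq_card_quotient_mul_card_subgroup (Subgroup.center G)
      rw [hcard, hc2] at h1
      have h2 : Nat.card (G ⧸ Subgroup.center G) * (2 * n) = m * (2 * n) := by
        rw [← h1]; try ring
      have h3 := Nat.eq_of_mul_eq_mul_right (by omega : 0 < 2 * n) h2
      omega
    exact aux_dihedral (m / 2) (by omega) (π a) (π b)
      (by rw [← map_pow]; exact (QuotientGroup.eq_one_iff _).mpr hamc)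
      (by rw [← map_pow]; exact (QuotientGroup.eq_one_iff _).mpr hb2c)
      hrelQ hgenQ hQcard
end

section
/- Let n ≥ 1 and let G be a group of order 6n generated by elements a and b satisfying a^(2n) = 1, b³ = 1, and a⁻¹·b·a = b⁻¹ (the group U_{6n}). Then the characteristic polynomial of the adjacency matrix of the commuting graph Γ_G (over the reals) equals (X + 1)^(5n − 4) · (X − (n − 1))^3 · (X − (2n − 1)); in particular G is commuting integral. -/
open Polynomial

/-!
Write every element of `U_{6n}` uniquely as `a ^ i * b ^ j` with `i < 2n`, `j < 3`. Since
`(a^i b^j)(a^k b^l) = a^(i+k) b^((-1)^k j + l)`, commuting depends only on `i mod 2` and `j`: the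
centre is `Z = ⟨a²⟩`, and the `5n` non-central elements fall into four classes of pairwise
commuting elements, namely `⟨a², b⟩ \ Z` of size `2n` and `⟨a b^j⟩ \ Z` of size `n` for each `j`,
elements of different classes never commuting. So the commuting graph is `K_{2n} ⊔ 3 K_n`.
For a disjoint union of cliques given by a labelling `c : V → I`, the adjacency matrix is
`M Mᵀ - 1` with `M` the incidence matrix of `c`, and `Mᵀ M` is diagonal with the class sizes, so
`charpoly_mul_comm_of_le` gives the characteristic polynomial.
-/

open Matrix in
theorem SimpleGraph.charpoly_adjMatrix_of_adj_iff {R V I : Type*} [CommRing R] [Fintype V]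
    [DecidableEq V] [Fintype I] [DecidableEq I] (H : SimpleGraph V) [DecidableRel H.Adj]
    (c : V → I) (hadj : ∀ x y, H.Adj x y ↔ x ≠ y ∧ c x = c y)
    (hI : Fintype.card I ≤ Fintype.card V) :
    (H.adjMatrix R).charpoly = (X + 1) ^ (Fintype.card V - Fintype.card I) *
      ∏ i, (X - C ((Fintype.card {x // c x = i} : R) - 1)) := by
  let M : Matrix V I R := of fun x i => if c x = i then 1 else 0
  have hMMt : H.adjMatrix R = M * Mᵀ - scalar V 1 := by
    ext x y
    by_cases hxy : x = y
    · simp [M, mul_apply, hxy]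
    · simp [M, mul_apply, hadj, hxy, eq_comm (a := c x)]
  have hMtM : Mᵀ * M = diagonal fun i => (Fintype.card {x // c x = i} : R) := by
    ext i j
    by_cases hij : i = j
    · simp [M, mul_apply, hij, ← ite_and, Finset.sum_boole, Fintype.card_subtype]
    · refine (Finset.sum_eq_zero fun x _ => ?_).trans (diagonal_apply_ne _ hij).symm
      by_cases hx : c x = i <;> simp [M, hx, hij]
  rw [hMMt, charpoly_sub_scalar, charpoly_mul_comm_of_le _ _ hI, hMtM, charpoly_diagonal]
  simp only [mul_comp, X_pow_comp, prod_comp, sub_comp, X_comp, C_comp, map_sub, map_one]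
  congr 1
  exact Finset.prod_congr rfl fun i _ => by ring

section PowVal

variable {G : Type*} [Group G] {a b : G} {m : ℕ} [NeZero m]

lemma pow_val_add (hb : b ^ m = 1) (j l : ZMod m) : b ^ (j + l).val = b ^ j.val * b ^ l.val := by
  rw [ZMod.val_add, ← pow_eq_pow_mod _ hb, pow_add]

lemma pow_val_neg (hb : b ^ m = 1) (t : ZMod m) : b ^ (-t).val = (b ^ t.val)⁻¹ :=
  eq_inv_of_mul_eq_one_left (by rw [← pow_val_add hb, neg_add_cancel, ZMod.val_zero, pow_zero])

lemma pow_val_mul_of_inv_mul_mul (hb : b ^ m = 1) (hrel : a⁻¹ * b * a = b⁻¹) (t : ZMod m) :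
    b ^ t.val * a = a * b ^ (-t).val := by
  have hconj : (a⁻¹ * b * a) ^ t.val = a⁻¹ * b ^ t.val * a := by
    simpa using conj_pow (i := t.val) (a := a⁻¹) (b := b)
  rw [pow_val_neg hb, ← inv_pow, ← hrel, hconj]
  group

lemma pow_val_mul_pow_of_inv_mul_mul (hb : b ^ m = 1) (hrel : a⁻¹ * b * a = b⁻¹) (t : ZMod m)
    (k : ℕ) : b ^ t.val * a ^ k = a ^ k * b ^ ((-1) ^ k * t).val := by
  induction k with
  | zero => simp
  | succ k ih =>
    rw [pow_succ, ← mul_assoc, ih, mul_assoc, pow_val_mul_of_inv_mul_mul hb hrel, ← mul_assoc]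
    congr 3
    ring

lemma pow_mul_pow_val_mul_of_inv_mul_mul (hb : b ^ m = 1) (hrel : a⁻¹ * b * a = b⁻¹) (i k : ℕ)
    (j l : ZMod m) :
    a ^ i * b ^ j.val * (a ^ k * b ^ l.val) = a ^ (i + k) * b ^ ((-1) ^ k * j + l).val := by
  rw [pow_val_add hb, pow_add, ← mul_assoc, mul_assoc (a ^ i),
    pow_val_mul_pow_of_inv_mul_mul hb hrel]
  simp only [mul_assoc]

end PowVal

namespace U6n

variable {G : Type*} [Group G] {a b : G} {n : ℕ}

lemma exists_eq_pow_mul_pow_val (hn : 0 < n) (ha : a ^ (2 * n) = 1) (hb : b ^ 3 = 1)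
    (hrel : a⁻¹ * b * a = b⁻¹) (hgen : Subgroup.closure {a, b} = ⊤) (g : G) :
    ∃ (i : ℕ) (j : ZMod 3), g = a ^ i * b ^ j.val := by
  have hb_left (t : ZMod 3) (i : ℕ) (j : ZMod 3) :
      b ^ t.val * (a ^ i * b ^ j.val) = a ^ i * b ^ ((-1) ^ i * t + j).val := by
    rw [← mul_assoc, pow_val_mul_pow_of_inv_mul_mul hb hrel, mul_assoc, pow_val_add hb]
  have ha_inv : a⁻¹ = a ^ (2 * n - 1) :=
    (eq_inv_of_mul_eq_one_left (by rw [← pow_succ, Nat.sub_add_cancel (by omega), ha])).symm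
  induction hgen ▸ Subgroup.mem_top g using Subgroup.closure_induction_left with
  | one => exact ⟨0, 0, by simp⟩
  | mul_left x hx y _ ih =>
    obtain ⟨i, j, rfl⟩ := ih
    rcases hx with rfl | rfl
    · exact ⟨i + 1, j, by rw [pow_succ', mul_assoc]⟩
    · exact ⟨i, (-1) ^ i * 1 + j, by rw [← hb_left, ZMod.val_one, pow_one]⟩
  | inv_mul_cancel x hx y _ ih =>
    obtain ⟨i, j, rfl⟩ := ih
    rcases hx with rfl | rfl
    · exact ⟨2 * n - 1 + i, j, by rw [ha_inv, pow_add, mul_assoc]⟩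
    · exact ⟨i, (-1) ^ i * -1 + j, by rw [← hb_left, pow_val_neg hb, ZMod.val_one, pow_one]⟩

lemma pow_val_injective (hb : b ^ 3 = 1) (hb1 : b ≠ 1) :
    Function.Injective fun j : ZMod 3 => b ^ j.val := by
  intro j l h
  have hord : orderOf b = 3 := orderOf_eq_prime hb hb1
  exact ZMod.val_injective 3 <|
    pow_injOn_Iio_orderOf (by rw [hord]; exact ZMod.val_lt j) (by rw [hord]; exact ZMod.val_lt l) h

/-- The condition `(-1)^k j + l = (-1)^i l + j` for `a^i b^j` and `a^k b^l` to commute, read on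
`u = (i mod 2, j)` and `v = (k mod 2, l)`. -/
def ExponentsCommute (u v : ZMod 2 × ZMod 3) : Prop :=
  (-1) ^ v.1.val * u.2 + v.2 = (-1) ^ u.1.val * v.2 + u.2

instance : DecidableRel ExponentsCommute := fun _ _ => inferInstanceAs (Decidable (_ = _))

/-- The commuting classes: `none` labels `⟨a², b⟩`, and `some j` labels `⟨a b^j⟩`. -/
def commClass (u : ZMod 2 × ZMod 3) : Option (ZMod 3) := if u.1 = 0 then none else some u.2

lemma forall_exponentsCommute_iff : ∀ v, (∀ u, ExponentsCommute u v) ↔ v = 0 := by decide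

lemma exponentsCommute_iff_commClass_eq :
    ∀ u v, u ≠ 0 → v ≠ 0 → (ExponentsCommute u v ↔ commClass u = commClass v) := by decide

lemma card_commClass_none : Nat.card {u // u ≠ 0 ∧ commClass u = none} = 2 := by
  rw [Nat.card_eq_fintype_card]
  decide

lemma card_commClass_some (j : ZMod 3) : Nat.card {u // u ≠ 0 ∧ commClass u = some j} = 1 := by
  rw [Nat.card_eq_fintype_card]
  revert j
  decide

/-- `((r, j), s) ↦ a ^ (2s + r) * b ^ j`: the exponent of `a` is split into its parity `r` and
its half `s`, which makes the class counts products. -/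
def normalForm (a b : G) (n : ℕ) (p : (ZMod 2 × ZMod 3) × Fin n) : G :=
  a ^ (2 * (p.2 : ℕ) + p.1.1.val) * b ^ p.1.2.val

lemma normalForm_surjective (hn : 0 < n) (ha : a ^ (2 * n) = 1) (hb : b ^ 3 = 1)
    (hrel : a⁻¹ * b * a = b⁻¹) (hgen : Subgroup.closure {a, b} = ⊤) :
    Function.Surjective (normalForm a b n) := by
  intro g
  obtain ⟨i, j, rfl⟩ := exists_eq_pow_mul_pow_val hn ha hb hrel hgen g
  have hi : i % (2 * n) < 2 * n := Nat.mod_lt i (by omega)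
  refine ⟨(((i % (2 * n) : ℕ), j), ⟨i % (2 * n) / 2, by omega⟩), ?_⟩
  rw [normalForm, ZMod.val_natCast, Nat.div_add_mod, ← pow_eq_pow_mod i ha]

lemma normalForm_bijective [Finite G] (hcard : Nat.card G = 6 * n) (ha : a ^ (2 * n) = 1)
    (hb : b ^ 3 = 1) (hrel : a⁻¹ * b * a = b⁻¹) (hgen : Subgroup.closure {a, b} = ⊤) :
    Function.Bijective (normalForm a b n) := by
  have hn : 0 < n := by have := Nat.card_pos (α := G); omega
  rw [Nat.bijective_iff_surjective_and_card]
  refine ⟨normalForm_surjective hn ha hb hrel hgen, ?_⟩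
  simp [hcard]

lemma ne_one_of_normalForm_injective (hn : 0 < n)
    (hinj : Function.Injective (normalForm a b n)) : b ≠ 1 := by
  intro h
  have := @hinj ((0, 1), ⟨0, hn⟩) ((0, 0), ⟨0, hn⟩) (by simp [normalForm, h])
  simp at this

lemma normalForm_mul_comm_iff (hb : b ^ 3 = 1) (hrel : a⁻¹ * b * a = b⁻¹) (hb1 : b ≠ 1)
    (p q : (ZMod 2 × ZMod 3) × Fin n) :
    normalForm a b n p * normalForm a b n q = normalForm a b n q * normalForm a b n p ↔
      ExponentsCommute p.1 q.1 := by
  have hsign (s : ℕ) (r : ZMod 2) : (-1 : ZMod 3) ^ (2 * s + r.val) = (-1) ^ r.val := by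
    rw [pow_add, pow_mul, neg_one_sq, one_pow, one_mul]
  rw [normalForm, normalForm, pow_mul_pow_val_mul_of_inv_mul_mul hb hrel,
    pow_mul_pow_val_mul_of_inv_mul_mul hb hrel, add_comm, mul_right_inj,
    (pow_val_injective hb hb1).eq_iff, hsign, hsign, ExponentsCommute]

lemma normalForm_mem_center_iff (hn : 0 < n) (hsurj : Function.Surjective (normalForm a b n))
    (hb : b ^ 3 = 1) (hrel : a⁻¹ * b * a = b⁻¹) (hb1 : b ≠ 1) (p : (ZMod 2 × ZMod 3) × Fin n) :
    normalForm a b n p ∈ Subgroup.center G ↔ p.1 = 0 := by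
  rw [Subgroup.mem_center_iff, hsurj.forall, ← forall_exponentsCommute_iff]
  simp only [normalForm_mul_comm_iff hb hrel hb1, Prod.forall]
  have : Nonempty (Fin n) := ⟨⟨0, hn⟩⟩
  simp

section Coordinates

variable (e : (ZMod 2 × ZMod 3) × Fin n ≃ G)

lemma commutingGraph_adj_iff (hcenter : ∀ p, e p ∈ Subgroup.center G ↔ p.1 = 0)
    (hcomm : ∀ p q, e p * e q = e q * e p ↔ ExponentsCommute p.1 q.1)
    (x y : {g : G // g ∉ Subgroup.center G}) :
    (commutingGraph G).Adj x y ↔ x ≠ y ∧ commClass (e.symm x).1 = commClass (e.symm y).1 := by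
  have hx : (e.symm x).1 ≠ 0 := fun h => x.2 (by simpa using (hcenter (e.symm x)).2 h)
  have hy : (e.symm y).1 ≠ 0 := fun h => y.2 (by simpa using (hcenter (e.symm y)).2 h)
  refine and_congr_right fun _ => ?_
  rw [← exponentsCommute_iff_commClass_eq _ _ hx hy, ← hcomm, e.apply_symm_apply,
    e.apply_symm_apply]

lemma card_commClass_fiber (hcenter : ∀ p, e p ∈ Subgroup.center G ↔ p.1 = 0)
    (o : Option (ZMod 3)) :
    Nat.card {x : {g : G // g ∉ Subgroup.center G} // commClass (e.symm x).1 = o} =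
      Nat.card {u // u ≠ 0 ∧ commClass u = o} * n := by
  calc _ = Nat.card {p : (ZMod 2 × ZMod 3) × Fin n // p.1 ≠ 0 ∧ commClass p.1 = o} := by
        refine (Nat.card_congr (Equiv.subtypeSubtypeEquivSubtypeInter
          (· ∉ Subgroup.center G) fun g => commClass (e.symm g).1 = o)).trans ?_
        exact Nat.card_congr (e.subtypeEquiv fun p => by simp [hcenter]).symm
    _ = _ := by
        rw [Nat.card_congr
          (Equiv.prodSubtypeFstEquivSubtypeProd (p := fun u => u ≠ 0 ∧ commClass u = o)),
          Nat.card_prod, Nat.card_fin]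

lemma commCharpoly_eq [Fintype G] (hcenter : ∀ p, e p ∈ Subgroup.center G ↔ p.1 = 0)
    (hcomm : ∀ p q, e p * e q = e q * e p ↔ ExponentsCommute p.1 q.1) :
    commCharpoly G =
      (X + 1) ^ (5 * n - 4) * (X - C ((n : ℝ) - 1)) ^ 3 * (X - C (2 * (n : ℝ) - 1)) := by
  classical
  have hn : 0 < n := Fin.pos (e.symm 1).2
  let c : {g : G // g ∉ Subgroup.center G} → Option (ZMod 3) := fun x => commClass (e.symm x).1
  have hfiber (o : Option (ZMod 3)) :
      Fintype.card {x // c x = o} = Nat.card {u // u ≠ 0 ∧ commClass u = o} * n := by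
    rw [Fintype.card_eq_nat_card]
    exact card_commClass_fiber e hcenter o
  have hV : Fintype.card {g : G // g ∉ Subgroup.center G} = 5 * n := by
    rw [← Fintype.card_congr (Equiv.sigmaFiberEquiv c), Fintype.card_sigma, Fintype.sum_option]
    simp only [hfiber, card_commClass_none, card_commClass_some, Finset.sum_const,
      Finset.card_univ, ZMod.card, smul_eq_mul]
    ring
  unfold commCharpoly
  rw [SimpleGraph.charpoly_adjMatrix_of_adj_iff _ c (commutingGraph_adj_iff e hcenter hcomm)
    (by simp [hV]; omega)]
  rw [Fintype.prod_option, hV, hfiber, card_commClass_none]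
  simp only [hfiber, card_commClass_some, Finset.prod_const, Finset.card_univ, ZMod.card,
    Fintype.card_option]
  push_cast
  rw [one_mul]
  ring

end Coordinates

end U6n

theorem commuting_integral_U6n_general
    (n : ℕ)
    (G : Type*) [Group G] [Fintype G] (a b : G)
    (hcard : Nat.card G = 6 * n)
    (ha : a ^ (2 * n) = 1) (hb : b ^ 3 = 1) (hrel : a⁻¹ * b * a = b⁻¹)
    (hgen : Subgroup.closure ({a, b} : Set G) = ⊤) :
    commCharpoly G =
        (X + 1) ^ (5 * n - 4) *
          (X - C ((n : ℝ) - 1)) ^ 3 *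
          (X - C (2 * (n : ℝ) - 1)) ∧
      ∀ μ : ℝ, (commCharpoly G).IsRoot μ → ∃ k : ℤ, μ = (k : ℝ) := by
  have hn : 0 < n := by have := Nat.card_pos (α := G); omega
  have hbij := U6n.normalForm_bijective hcard ha hb hrel hgen
  have hb1 := U6n.ne_one_of_normalForm_injective hn hbij.1
  have hchar := U6n.commCharpoly_eq (Equiv.ofBijective _ hbij)
    (U6n.normalForm_mem_center_iff hn hbij.2 hb hrel hb1) (U6n.normalForm_mul_comm_iff hb hrel hb1)
  refine ⟨hchar, fun μ hμ => ?_⟩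
  simp only [hchar, IsRoot, eval_mul, eval_pow, eval_add, eval_sub, eval_X, eval_one, eval_C,
    mul_eq_zero, pow_eq_zero_iff', sub_eq_zero] at hμ
  rcases hμ with (⟨h, -⟩ | ⟨h, -⟩) | h
  · exact ⟨-1, by push_cast; linarith⟩
  · exact ⟨n - 1, by push_cast; linarith⟩
  · exact ⟨2 * n - 1, by push_cast; linarith⟩

theorem commuting_integral_U6n
    (n : ℕ) (hn : 1 ≤ n)
    (G : Type*) [Group G] [Fintype G] (a b : G)
    (hcard : Nat.card G = 6 * n)
    (ha : a ^ (2 * n) = 1) (hb : b ^ 3 = 1) (hrel : a⁻¹ * b * a = b⁻¹)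
    (hgen : Subgroup.closure ({a, b} : Set G) = ⊤) :
    commCharpoly G =
        (X + 1) ^ (5 * n - 4) *
          (X - C ((n : ℝ) - 1)) ^ 3 *
          (X - C (2 * (n : ℝ) - 1)) ∧
      ∀ μ : ℝ, (commCharpoly G).IsRoot μ → ∃ k : ℤ, μ = (k : ℝ) :=
  commuting_integral_U6n_general n G a b hcard ha hb hrel hgen
end

section
/- Let n ≥ 1 and let G be a group of order 6n generated by elements a and b satisfying a^(2n) = 1, b³ = 1, and a⁻¹·b·a = b⁻¹ (the group U_{6n}). Then Z(G) = ⟨a²⟩, |Z(G)| = n, and G/Z(G) is isomorphic to the dihedral group of order 6 (Mathlib's DihedralGroup 3). -/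
/-!
Conjugation by `a` inverts `b`, so `a²` commutes with both generators and `⟨a²⟩` is central; it has
order at most `n` because `a ^ (2 * n) = 1`. Modulo `⟨a²⟩` the images of `a` and `b` satisfy the
relations of `D₃`, which gives a surjection `D₃ → G ⧸ ⟨a²⟩`. As `|G| = 6n`, comparing orders forces
`|⟨a²⟩| = n` and makes the surjection an isomorphism. Finally `D₃` has trivial center, so the
center of `G` is no larger than `⟨a²⟩`.
-/

namespace ZMod

variable {n : ℕ} [NeZero n] {G : Type*} [Group G] {x : G}

theorem pow_val_eq_zpow (hx : x ^ n = 1) {i : ZMod n} {k : ℤ} (hk : (k : ZMod n) = i) :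
    x ^ i.val = x ^ k := by
  rw [← zpow_natCast, zpow_eq_zpow_iff_modEq]
  refine Int.ModEq.of_dvd (Int.natCast_dvd_natCast.2 (orderOf_dvd_of_pow_eq_one hx)) ?_
  rw [← ZMod.intCast_eq_intCast_iff, hk]
  simp

theorem pow_val_add (hx : x ^ n = 1) (i j : ZMod n) :
    x ^ (i + j).val = x ^ i.val * x ^ j.val := by
  rw [pow_val_eq_zpow hx (k := i.val + j.val) (by simp), zpow_add, zpow_natCast, zpow_natCast]

theorem pow_val_sub (hx : x ^ n = 1) (i j : ZMod n) :
    x ^ (j - i).val = (x ^ i.val)⁻¹ * x ^ j.val := by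
  rw [pow_val_eq_zpow hx (k := -i.val + j.val) (by simp; ring), zpow_add, zpow_neg,
    zpow_natCast, zpow_natCast]

end ZMod

section Inversion

variable {G : Type*} [Group G] {a b : G}

theorem pow_mul_eq_mul_inv_pow_of_inv_mul_mul_eq_inv (h : a⁻¹ * b * a = b⁻¹) (k : ℕ) :
    b ^ k * a = a * (b ^ k)⁻¹ := by
  have hk := conj_pow (a := a⁻¹) (b := b) (i := k)
  rw [inv_inv, h, inv_pow] at hk
  rw [hk]
  group

theorem commute_sq_of_inv_mul_mul_eq_inv (h : a⁻¹ * b * a = b⁻¹) : Commute (a ^ 2) b := by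
  have hb : a⁻¹ * (a⁻¹ * b * a) * a = b := by
    rw [h, show a⁻¹ * b⁻¹ * a = (a⁻¹ * b * a)⁻¹ by group, h, inv_inv]
  calc a ^ 2 * b = a ^ 2 * (a⁻¹ * (a⁻¹ * b * a) * a) := by rw [hb]
    _ = b * a ^ 2 := by simp only [sq]; group

theorem sq_mem_center_of_inv_mul_mul_eq_inv (h : a⁻¹ * b * a = b⁻¹)
    (hgen : Subgroup.closure {a, b} = ⊤) : a ^ 2 ∈ Subgroup.center G := by
  rw [← Subgroup.centralizer_univ, ← Subgroup.coe_top, ← hgen, Subgroup.centralizer_closure,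
    Subgroup.mem_centralizer_iff]
  rintro _ (rfl | rfl)
  · exact (Commute.self_pow _ 2).eq
  · exact (commute_sq_of_inv_mul_mul_eq_inv h).eq.symm

end Inversion

namespace DihedralGroup

variable {n : ℕ} [NeZero n] {G : Type*} [Group G] {σ ρ : G}

def lift (hρ : ρ ^ n = 1) (hσ : σ ^ 2 = 1) (hσρ : σ⁻¹ * ρ * σ = ρ⁻¹) : DihedralGroup n →* G where
  toFun
    | r i => ρ ^ i.val
    | sr i => σ * ρ ^ i.val
  map_one' := by
    show ρ ^ (0 : ZMod n).val = 1
    rw [ZMod.val_zero, pow_zero]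
  map_mul' := by
    rintro (i | i) (j | j)
    · simp only [r_mul_r, ZMod.pow_val_add hρ]
    · simp only [r_mul_sr, ZMod.pow_val_sub hρ, ← mul_assoc,
        pow_mul_eq_mul_inv_pow_of_inv_mul_mul_eq_inv hσρ]
    · simp only [sr_mul_r, ZMod.pow_val_add hρ, mul_assoc]
    · simp only [sr_mul_sr, ZMod.pow_val_sub hρ]
      rw [mul_assoc σ, ← mul_assoc _ σ, pow_mul_eq_mul_inv_pow_of_inv_mul_mul_eq_inv hσρ,
        ← mul_assoc, ← mul_assoc, ← sq, hσ, one_mul]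

variable (hρ : ρ ^ n = 1) (hσ : σ ^ 2 = 1) (hσρ : σ⁻¹ * ρ * σ = ρ⁻¹)

@[simp]
theorem lift_r (i : ZMod n) : lift hρ hσ hσρ (r i) = ρ ^ i.val := rfl

@[simp]
theorem lift_sr (i : ZMod n) : lift hρ hσ hσρ (sr i) = σ * ρ ^ i.val := rfl

theorem lift_surjective (h : Subgroup.closure {σ, ρ} = ⊤) :
    Function.Surjective (lift hρ hσ hσρ) := by
  rw [← MonoidHom.range_eq_top, eq_top_iff, ← h, Subgroup.closure_le]
  rintro _ (rfl | rfl)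
  · exact ⟨sr 0, by simp⟩
  · exact ⟨r 1, by simpa using ZMod.pow_val_eq_zpow hρ (k := 1) (by simp)⟩

end DihedralGroup

namespace Subgroup

variable {G : Type*} [Group G]

theorem normal_of_le_center {H : Subgroup G} (h : H ≤ center G) : H.Normal :=
  ⟨fun x hx g => by simpa [mem_center_iff.mp (h hx) g] using hx⟩

theorem center_le_of_mulEquiv_quotient {H : Type*} [Group H] {N : Subgroup G} [N.Normal]
    (e : H ≃* G ⧸ N) (hH : center H = ⊥) : center G ≤ N := by
  intro g hg
  have hmk : (g : G ⧸ N) ∈ center (G ⧸ N) := by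
    rw [mem_center_iff]
    rintro ⟨x⟩
    exact congrArg ((↑) : G → G ⧸ N) (mem_center_iff.mp hg x)
  have he : e.symm g ∈ center H := MulEquivClass.apply_mem_center e.symm hmk
  rwa [hH, mem_bot, MulEquiv.symm_apply_eq, map_one, QuotientGroup.eq_one_iff] at he

theorem card_eq_and_bijective_of_surjective [Finite G] {H : Type*} [Group H] [Finite H]
    {N : Subgroup G} [N.Normal] (f : H →* G ⧸ N) (hf : Function.Surjective f) {m : ℕ}
    (hN : Nat.card N ≤ m) (hG : Nat.card G = Nat.card H * m) :
    Nat.card N = m ∧ Function.Bijective f := by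
  have hQ : Nat.card (G ⧸ N) ≤ Nat.card H := Nat.card_le_card_of_surjective f hf
  have hLagrange := card_eq_card_quotient_mul_card_subgroup N
  have hpos : 0 < Nat.card H * m := hG ▸ Nat.card_pos
  have hNm : Nat.card N = m := by
    refine le_antisymm hN (Nat.le_of_mul_le_mul_left ?_ (Nat.pos_of_mul_pos_right hpos))
    calc Nat.card H * m = Nat.card (G ⧸ N) * Nat.card N := hG.symm.trans hLagrange
      _ ≤ Nat.card H * Nat.card N := Nat.mul_le_mul_right _ hQ
  refine ⟨hNm, (Nat.bijective_iff_surjective_and_card f).2 ⟨hf, ?_⟩⟩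
  rw [hG, hNm] at hLagrange
  exact Nat.eq_of_mul_eq_mul_right (Nat.pos_of_mul_pos_left hpos) hLagrange

end Subgroup

theorem center_and_central_quotient_of_U6n_general
    (n : ℕ)
    (G : Type*) [Group G] [Finite G] (a b : G)
    (hcard : Nat.card G = 6 * n)
    (ha : a ^ (2 * n) = 1) (hb : b ^ 3 = 1) (hrel : a⁻¹ * b * a = b⁻¹)
    (hgen : Subgroup.closure ({a, b} : Set G) = ⊤) :
    Subgroup.center G = Subgroup.zpowers (a ^ 2) ∧
      Nat.card (Subgroup.center G) = n ∧
      Nonempty ((G ⧸ Subgroup.center G) ≃* DihedralGroup 3) := by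
  set Z := Subgroup.zpowers (a ^ 2)
  have hZ : Z ≤ Subgroup.center G :=
    Subgroup.zpowers_le.2 (sq_mem_center_of_inv_mul_mul_eq_inv hrel hgen)
  have := Subgroup.normal_of_le_center hZ
  let π := QuotientGroup.mk' Z
  have hσ : π a ^ 2 = 1 := by
    rw [← map_pow, QuotientGroup.mk'_apply, QuotientGroup.eq_one_iff]
    exact Subgroup.mem_zpowers _
  have hρ : π b ^ 3 = 1 := by rw [← map_pow, hb, map_one]
  have hσρ : (π a)⁻¹ * π b * π a = (π b)⁻¹ := by simp only [← map_inv, ← map_mul, hrel]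
  have hπgen : Subgroup.closure {π a, π b} = ⊤ := by
    rw [← Set.image_pair, ← MonoidHom.map_closure, hgen,
      Subgroup.map_top_of_surjective _ (QuotientGroup.mk'_surjective Z)]
  have hcardZ : Nat.card Z ≤ n := by
    have hn : 0 < n := by have := Nat.card_pos (α := G); omega
    rw [Nat.card_zpowers]
    exact orderOf_le_of_pow_eq_one hn (by rw [← pow_mul, ha])
  obtain ⟨hcardZ, hbij⟩ := Subgroup.card_eq_and_bijective_of_surjective
    (DihedralGroup.lift hρ hσ hσρ) (DihedralGroup.lift_surjective hρ hσ hσρ hπgen) hcardZ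
    (by rw [hcard, DihedralGroup.nat_card])
  let e := MulEquiv.ofBijective _ hbij
  have hcenter : Subgroup.center G = Z := le_antisymm
    (Subgroup.center_le_of_mulEquiv_quotient e
      (DihedralGroup.center_eq_bot_of_odd_ne_one (by decide) (by decide))) hZ
  exact ⟨hcenter, hcenter ▸ hcardZ, ⟨(QuotientGroup.quotientMulEquivOfEq hcenter).trans e.symm⟩⟩

theorem center_and_central_quotient_of_U6n
    (n : ℕ) (hn : 1 ≤ n)
    (G : Type*) [Group G] [Finite G] (a b : G)
    (hcard : Nat.card G = 6 * n)
    (ha : a ^ (2 * n) = 1) (hb : b ^ 3 = 1) (hrel : a⁻¹ * b * a = b⁻¹)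
    (hgen : Subgroup.closure ({a, b} : Set G) = ⊤) :
    Subgroup.center G = Subgroup.zpowers (a ^ 2) ∧
      Nat.card (Subgroup.center G) = n ∧
      Nonempty ((G ⧸ Subgroup.center G) ≃* DihedralGroup 3) :=
  center_and_central_quotient_of_U6n_general n G a b hcard ha hb hrel hgen
end
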